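/- arXiv:2406.04431 — 3 statements merged into one kernel-verified Lean document; each statement's English description precedes it below -/
import Mathlib

section
/- Let Ω ⊆ ℝⁿ be a domain and F ∈ C²(Ω). Then for every x, y ∈ Ω, |F(x) − F(y) − ⟨∇F(y), x − y⟩| ≤ n ‖F‖_{C²(Ω)} · d_Ω(x, y)², where d_Ω is the intrinsic metric on Ω. -/
/-- `ℝⁿ` with the max (uniform) norm. -/
abbrev En (n : ℕ) := Fin n → ℝ

/-- The intrinsic (geodesic) metric on a set `Ω`: the infimum of lengths
(total variation) of curves joining `x` to `y` inside `Ω`. -/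
noncomputable def dOmega {E : Type*} [NormedAddCommGroup E] (Ω : Set E) (x y : E) : ENNReal :=
  ⨅ γ ∈ {γ : ℝ → E | ContinuousOn γ (Set.Icc 0 1) ∧ γ 0 = x ∧ γ 1 = y ∧
      Set.MapsTo γ (Set.Icc 0 1) Ω},
    eVariationOn γ (Set.Icc 0 1)

/-- The standard inner product on `ℝⁿ`. -/
noncomputable def ip {n : ℕ} (u v : En n) : ℝ := ∑ i, u i * v i

/-- The gradient of `F : ℝⁿ → ℝ`. -/
noncomputable def grad {n : ℕ} (F : En n → ℝ) (x : En n) : En n :=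
  fun i => fderiv ℝ F x (Pi.single i 1)

/-- Second partial derivative `∂_i ∂_j F`. -/
noncomputable def pd2 {n : ℕ} (i j : Fin n) (F : En n → ℝ) (x : En n) : ℝ :=
  fderiv ℝ (fun y => fderiv ℝ F y (Pi.single j 1)) x (Pi.single i 1)

/-- The homogeneous `C²` seminorm `‖F‖_{C²(Ω)} = Σ_{|α|=2} sup_Ω |D^α F|`
(multi-indices of order 2 correspond to pairs `i ≤ j`). -/
noncomputable def C2norm {n : ℕ} (Ω : Set (En n)) (F : En n → ℝ) : ℝ :=
  ∑ p ∈ Finset.univ.filter (fun p : Fin n × Fin n => p.1 ≤ p.2),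
    ⨆ x ∈ Ω, |pd2 p.1 p.2 F x|



open Set Metric Finset

lemma clm_apply_eq_sum {n : ℕ} (L : En n →L[ℝ] ℝ) (w : En n) :
    L w = ∑ i, w i * L (Pi.single i 1) := by
  have hw : w = ∑ i, w i • (Pi.single i 1 : En n) := by
    funext j
    simp [Finset.sum_apply, Pi.single_apply]
  conv_lhs => rw [hw]
  rw [map_sum]
  simp [smul_eq_mul]

lemma clm_norm_le {n : ℕ} (L : En n →L[ℝ] ℝ) : ‖L‖ ≤ ∑ i, |L (Pi.single i 1)| := by
  refine L.opNorm_le_bound (by positivity) fun w => ?_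
  rw [clm_apply_eq_sum L w, Real.norm_eq_abs]
  calc |∑ i, w i * L (Pi.single i 1)| ≤ ∑ i, |w i * L (Pi.single i 1)| :=
        Finset.abs_sum_le_sum_abs _ _
    _ ≤ ∑ i, ‖w‖ * |L (Pi.single i 1)| := by
        refine Finset.sum_le_sum fun i _ => ?_
        rw [abs_mul]
        exact mul_le_mul_of_nonneg_right (norm_le_pi_norm w i) (abs_nonneg _)
    _ = (∑ i, |L (Pi.single i 1)|) * ‖w‖ := by rw [Finset.sum_mul]; exact Finset.sum_congr rfl fun i _ => mul_comm _ _

lemma biSup_eq {α : Type*} {Ω : Set α} {f : α → ℝ} (hne : Ω.Nonempty)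
    (hbdd : BddAbove (f '' Ω)) (hf : ∀ z ∈ Ω, 0 ≤ f z) :
    (⨆ x ∈ Ω, f x) = sSup (f '' Ω) := by
  obtain ⟨z0, hz0⟩ := hne
  have h0 : 0 ≤ sSup (f '' Ω) := (hf z0 hz0).trans (le_csSup hbdd ⟨z0, hz0, rfl⟩)
  apply le_antisymm
  · refine Real.iSup_le (fun z => Real.iSup_le (fun hz => le_csSup hbdd ⟨z, hz, rfl⟩) h0) h0
  · refine csSup_le ⟨f z0, z0, hz0, rfl⟩ ?_
    rintro b ⟨z, hz, rfl⟩
    have h1 : f z ≤ ⨆ _ : z ∈ Ω, f z :=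
      le_ciSup (f := fun _ : z ∈ Ω => f z) ⟨f z, by rintro _ ⟨h, rfl⟩; exact le_rfl⟩ hz
    refine h1.trans (le_ciSup (f := fun x => ⨆ _ : x ∈ Ω, f x) ?_ z)
    refine ⟨sSup (f '' Ω), ?_⟩
    rintro _ ⟨x, rfl⟩
    exact Real.iSup_le (fun hx => le_csSup hbdd ⟨x, hx, rfl⟩) h0

lemma exists_ball_radius {n : ℕ} {Ω : Set (En n)} (hopen : IsOpen Ω) {γ : ℝ → En n} {a b : ℝ}
    (hγc : ContinuousOn γ (Icc a b)) (hγm : MapsTo γ (Icc a b) Ω) :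
    ∃ δ > 0, ∀ t ∈ Icc a b, ball (γ t) δ ⊆ Ω := by
  have hK : IsCompact (γ '' Icc a b) := (isCompact_Icc).image_of_continuousOn hγc
  obtain ⟨δ, hδ, h⟩ := hK.exists_thickening_subset_open hopen (hγm.image_subset)
  exact ⟨δ, hδ, fun t ht => (ball_subset_thickening (mem_image_of_mem γ ht) δ).trans h⟩

lemma telescope_bound {n : ℕ} {Ω : Set (En n)} (hopen : IsOpen Ω)
    {G : En n → ℝ} (hG : ∀ z ∈ Ω, DifferentiableAt ℝ G z)
    {γ : ℝ → En n} {a b : ℝ} (hab : a ≤ b)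
    (hγc : ContinuousOn γ (Icc a b)) (hγm : MapsTo γ (Icc a b) Ω)
    {δ M V : ℝ} (hδ : 0 < δ) (hM : 0 ≤ M) (hV0 : 0 ≤ V)
    (hball : ∀ t ∈ Icc a b, ball (γ t) δ ⊆ Ω)
    (hbound : ∀ t ∈ Icc a b, ∀ ξ ∈ ball (γ t) δ, ‖fderiv ℝ G ξ‖ ≤ M)
    (hV : eVariationOn γ (Icc a b) ≤ ENNReal.ofReal V) :
    |G (γ b) - G (γ a)| ≤ M * V := by
  rcases eq_or_lt_of_le hab with rfl | hab'
  · simp [mul_nonneg hM hV0]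
  -- uniform continuity
  obtain ⟨η, hη, hunif⟩ :=
    Metric.uniformContinuousOn_iff.mp
      (isCompact_Icc.uniformContinuousOn_of_continuous hγc) δ hδ
  obtain ⟨N, hN⟩ := exists_nat_gt (max 1 ((b - a) / η))
  have hN1 : (1 : ℝ) < N := lt_of_le_of_lt (le_max_left _ _) hN
  have hN0 : (0 : ℝ) < N := by linarith
  have hNn : 0 < N := by exact_mod_cast hN0
  have hstep : (b - a) / N < η := by
    rw [div_lt_iff₀ hN0]
    have := lt_of_le_of_lt (le_max_right 1 ((b - a) / η)) hN
    rw [div_lt_iff₀ hη] at this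
    linarith [this]
  have hc0 : 0 < (b - a) / N := div_pos (by linarith) hN0
  set c : ℝ := (b - a) / N with hc
  set t : ℕ → ℝ := fun k => a + (min k N : ℕ) * c with ht
  have tmem : ∀ k, t k ∈ Icc a b := by
    intro k
    constructor
    · have : (0:ℝ) ≤ (min k N : ℕ) * c := by positivity
      simp only [ht]; linarith [this]
    · have h1 : ((min k N : ℕ) : ℝ) ≤ N := by exact_mod_cast Nat.cast_le.mpr (min_le_right k N)
      have : ((min k N : ℕ) : ℝ) * c ≤ N * c :=
        mul_le_mul_of_nonneg_right h1 (le_of_lt hc0)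
      have h2 : (N:ℝ) * c = b - a := by rw [hc]; field_simp
      simp only [ht]; linarith [this, h2]
  have tmono : Monotone t := by
    intro k l hkl
    have : ((min k N : ℕ) : ℝ) ≤ ((min l N : ℕ) : ℝ) := by
      exact_mod_cast Nat.cast_le.mpr (min_le_min_right N hkl)
    simp only [ht]
    nlinarith [mul_le_mul_of_nonneg_right this hc0.le]
  have t0 : t 0 = a := by simp [ht]
  have tN : t N = b := by
    simp only [ht, min_self]
    rw [hc]; field_simp; ring
  have tsucc : ∀ k < N, t (k + 1) - t k = c := by
    intro k hk
    have h1 : min (k+1) N = k+1 := min_eq_left (by omega)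
    have h2 : min k N = k := min_eq_left (by omega)
    simp only [ht, h1, h2]
    push_cast
    ring
  -- per-step bound
  have hstepb : ∀ k < N, |G (γ (t (k+1))) - G (γ (t k))| ≤ M * ‖γ (t (k+1)) - γ (t k)‖ := by
    intro k hk
    have hmem : γ (t (k+1)) ∈ ball (γ (t k)) δ := by
      rw [mem_ball]
      apply hunif _ (tmem (k+1)) _ (tmem k)
      rw [Real.dist_eq, tsucc k hk, abs_of_pos hc0]
      exact hstep
    have hmem0 : γ (t k) ∈ ball (γ (t k)) δ := mem_ball_self hδ
    have := Convex.norm_image_sub_le_of_norm_fderiv_le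
      (fun ξ hξ => hG ξ (hball (t k) (tmem k) hξ))
      (fun ξ hξ => hbound (t k) (tmem k) ξ hξ)
      (convex_ball _ _) hmem0 hmem
    simpa [Real.norm_eq_abs] using this
  -- sum of increments bounded by V
  have hsum : ∑ k ∈ Finset.range N, ‖γ (t (k+1)) - γ (t k)‖ ≤ V := by
    have hle := eVariationOn.sum_le (f := γ) (n := N) tmono tmem
    have heq : ∑ k ∈ Finset.range N, edist (γ (t (k+1))) (γ (t k)) =
        ENNReal.ofReal (∑ k ∈ Finset.range N, ‖γ (t (k+1)) - γ (t k)‖) := by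
      rw [ENNReal.ofReal_sum_of_nonneg (fun k _ => norm_nonneg _)]
      refine Finset.sum_congr rfl fun k _ => ?_
      rw [edist_dist, dist_eq_norm]
    rw [heq] at hle
    exact (ENNReal.ofReal_le_ofReal_iff hV0).mp (hle.trans hV)
  -- telescoping
  have htel : G (γ b) - G (γ a) = ∑ k ∈ Finset.range N, (G (γ (t (k+1))) - G (γ (t k))) := by
    rw [Finset.sum_range_sub (fun k => G (γ (t k))) N, t0, tN]
  calc |G (γ b) - G (γ a)| = |∑ k ∈ Finset.range N, (G (γ (t (k+1))) - G (γ (t k)))| := by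
        rw [htel]
    _ ≤ ∑ k ∈ Finset.range N, |G (γ (t (k+1))) - G (γ (t k))| := Finset.abs_sum_le_sum_abs _ _
    _ ≤ ∑ k ∈ Finset.range N, M * ‖γ (t (k+1)) - γ (t k)‖ :=
        Finset.sum_le_sum fun k hk => hstepb k (Finset.mem_range.mp hk)
    _ = M * ∑ k ∈ Finset.range N, ‖γ (t (k+1)) - γ (t k)‖ := by rw [Finset.mul_sum]
    _ ≤ M * V := mul_le_mul_of_nonneg_left hsum hM

lemma curve_lip {n : ℕ} {Ω : Set (En n)} (hopen : IsOpen Ω)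
    {G : En n → ℝ} (hG : ∀ z ∈ Ω, DifferentiableAt ℝ G z)
    {M : ℝ} (hM : 0 ≤ M) (hGb : ∀ z ∈ Ω, ‖fderiv ℝ G z‖ ≤ M)
    {γ : ℝ → En n} {a b : ℝ} (hab : a ≤ b)
    (hγc : ContinuousOn γ (Icc a b)) (hγm : MapsTo γ (Icc a b) Ω)
    {V : ℝ} (hV0 : 0 ≤ V) (hV : eVariationOn γ (Icc a b) ≤ ENNReal.ofReal V) :
    |G (γ b) - G (γ a)| ≤ M * V := by
  obtain ⟨δ, hδ, hballs⟩ := exists_ball_radius hopen hγc hγm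
  exact telescope_bound hopen hG hab hγc hγm hδ hM hV0 hballs
    (fun t ht ξ hξ => hGb ξ (hballs t ht hξ)) hV

lemma curve_bound {n : ℕ} {Ω : Set (En n)} (hopen : IsOpen Ω)
    {F : En n → ℝ} (hF : ContDiffOn ℝ 2 F Ω)
    (hbdd : ∀ i j : Fin n, BddAbove ((fun x => |pd2 i j F x|) '' Ω))
    {γ : ℝ → En n} (hγc : ContinuousOn γ (Icc 0 1)) (hγm : MapsTo γ (Icc 0 1) Ω)
    {V : ℝ} (hV0 : 0 ≤ V) (hV : eVariationOn γ (Icc 0 1) ≤ ENNReal.ofReal V) :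
    |F (γ 0) - F (γ 1) - ip (grad F (γ 1)) (γ 0 - γ 1)| ≤
      (∑ p : Fin n × Fin n, sSup ((fun x => |pd2 p.1 p.2 F x|) '' Ω)) * (V * V) := by
  classical
  set A : Fin n → Fin n → ℝ := fun i j => sSup ((fun x => |pd2 i j F x|) '' Ω) with hA
  have hA0 : ∀ i j, 0 ≤ A i j := by
    intro i j
    apply Real.sSup_nonneg
    rintro x ⟨z, hz, rfl⟩
    exact abs_nonneg _
  have hAle : ∀ i j, ∀ z ∈ Ω, |pd2 i j F z| ≤ A i j := fun i j z hz =>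
    le_csSup (hbdd i j) ⟨z, hz, rfl⟩
  set Gi : Fin n → En n → ℝ := fun i z => fderiv ℝ F z (Pi.single i 1) with hGi
  set Mi : Fin n → ℝ := fun i => ∑ j, A j i with hMi
  have hMi0 : ∀ i, 0 ≤ Mi i := fun i => Finset.sum_nonneg fun j _ => hA0 j i
  have hFd : ∀ z ∈ Ω, DifferentiableAt ℝ F z := fun z hz =>
    ((hF.differentiableOn two_ne_zero).differentiableAt (hopen.mem_nhds hz))
  have hfd : ContDiffOn ℝ 1 (fun z => fderiv ℝ F z) Ω :=
    hF.fderiv_of_isOpen hopen le_rfl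
  have hGd : ∀ i, ∀ z ∈ Ω, DifferentiableAt ℝ (Gi i) z := by
    intro i z hz
    exact ((hfd.clm_apply contDiffOn_const).differentiableOn one_ne_zero).differentiableAt
      (hopen.mem_nhds hz)
  have hGderiv : ∀ i j z, fderiv ℝ (Gi i) z (Pi.single j 1) = pd2 j i F z := fun i j z => rfl
  have hGb : ∀ i, ∀ z ∈ Ω, ‖fderiv ℝ (Gi i) z‖ ≤ Mi i := by
    intro i z hz
    refine (clm_norm_le _).trans ?_
    rw [hMi]
    refine Finset.sum_le_sum fun j _ => ?_
    rw [hGderiv]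
    exact hAle j i z hz
  -- the linear functional
  set g : En n := grad F (γ 1) with hg
  set T : En n →L[ℝ] ℝ :=
    ∑ i, g i • (ContinuousLinearMap.proj (R := ℝ) (φ := fun _ : Fin n => ℝ) i) with hT
  have hTapp : ∀ w, T w = ip g w := by
    intro w
    simp only [hT, ContinuousLinearMap.sum_apply, ContinuousLinearMap.smul_apply,
      ContinuousLinearMap.proj_apply, ip, smul_eq_mul]
  have hTsingle : ∀ i, T (Pi.single i 1) = g i := by
    intro i
    rw [hTapp]
    simp [ip, Pi.single_apply]
  set H : En n → ℝ := fun z => F z - T z with hH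
  have hHd : ∀ z ∈ Ω, DifferentiableAt ℝ H z := fun z hz =>
    (hFd z hz).sub (T.differentiableAt)
  have hHderiv : ∀ z ∈ Ω, fderiv ℝ H z = fderiv ℝ F z - T := by
    intro z hz
    rw [hH]
    rw [fderiv_fun_sub (hFd z hz) T.differentiableAt, T.fderiv]
  have hy : γ 1 ∈ Ω := hγm ⟨zero_le_one, le_rfl⟩
  -- rewrite the target as H (γ 0) - H (γ 1)
  have hRT : F (γ 0) - F (γ 1) - ip g (γ 0 - γ 1) = H (γ 0) - H (γ 1) := by
    have := hTapp (γ 0 - γ 1)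
    rw [map_sub] at this
    simp only [hH]
    linarith [this]
  rw [hRT]
  obtain ⟨δ0, hδ0, hballs⟩ := exists_ball_radius hopen hγc hγm
  set K : ℝ := ∑ i, Mi i with hK
  have hK0 : 0 ≤ K := Finset.sum_nonneg fun i _ => hMi0 i
  have hKeq : K = ∑ p : Fin n × Fin n, A p.1 p.2 := by
    rw [hK, Fintype.sum_prod_type]
    exact Finset.sum_comm
  -- key bound for every small δ
  have key : ∀ δ : ℝ, 0 < δ → δ ≤ δ0 → |H (γ 0) - H (γ 1)| ≤ K * (V + δ) * V := by
    intro δ hδ hδle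
    have hball : ∀ t ∈ Icc (0:ℝ) 1, ball (γ t) δ ⊆ Ω := fun t ht =>
      (ball_subset_ball hδle).trans (hballs t ht)
    have hbound : ∀ t ∈ Icc (0:ℝ) 1, ∀ ξ ∈ ball (γ t) δ, ‖fderiv ℝ H ξ‖ ≤ K * (V + δ) := by
      intro t ht ξ hξ
      have hξΩ : ξ ∈ Ω := hball t ht hξ
      have hγtΩ : γ t ∈ Ω := hγm ht
      rw [hHderiv ξ hξΩ]
      refine (clm_norm_le _).trans ?_
      have hterm : ∀ i, |(fderiv ℝ F ξ - T) (Pi.single i 1)| ≤ Mi i * (V + δ) := by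
        intro i
        have h1 : (fderiv ℝ F ξ - T) (Pi.single i 1) = Gi i ξ - Gi i (γ 1) := by
          rw [ContinuousLinearMap.sub_apply, hTsingle]
          rfl
        rw [h1]
        have hseg : |Gi i ξ - Gi i (γ t)| ≤ Mi i * δ := by
          have := Convex.norm_image_sub_le_of_norm_fderiv_le
            (f := Gi i) (C := Mi i) (s := ball (γ t) δ0)
            (fun w hw => hGd i w (hballs t ht hw))
            (fun w hw => hGb i w (hballs t ht hw))
            (convex_ball _ _) (mem_ball_self hδ0) (ball_subset_ball hδle hξ)
          rw [Real.norm_eq_abs] at this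
          refine this.trans ?_
          refine mul_le_mul_of_nonneg_left ?_ (hMi0 i)
          have := mem_ball_iff_norm.mp hξ
          linarith [this]
        have hcurve : |Gi i (γ t) - Gi i (γ 1)| ≤ Mi i * V := by
          have hsub : Icc t 1 ⊆ Icc (0:ℝ) 1 := Icc_subset_Icc ht.1 le_rfl
          have := curve_lip hopen (fun z hz => hGd i z hz) (hMi0 i)
            (fun z hz => hGb i z hz) ht.2 (hγc.mono hsub) (hγm.mono_left hsub)
            hV0 ((eVariationOn.mono γ hsub).trans hV)
          calc |Gi i (γ t) - Gi i (γ 1)| = |Gi i (γ 1) - Gi i (γ t)| := abs_sub_comm _ _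
            _ ≤ Mi i * V := this
        calc |Gi i ξ - Gi i (γ 1)|
            ≤ |Gi i ξ - Gi i (γ t)| + |Gi i (γ t) - Gi i (γ 1)| := abs_sub_le _ _ _
          _ ≤ Mi i * δ + Mi i * V := add_le_add hseg hcurve
          _ = Mi i * (V + δ) := by ring
      calc ∑ i, |(fderiv ℝ F ξ - T) (Pi.single i 1)| ≤ ∑ i, Mi i * (V + δ) :=
            Finset.sum_le_sum fun i _ => hterm i
        _ = K * (V + δ) := by rw [hK, Finset.sum_mul]
    have := telescope_bound hopen hHd zero_le_one hγc hγm hδ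
      (by positivity) hV0 hball hbound hV
    calc |H (γ 0) - H (γ 1)| = |H (γ 1) - H (γ 0)| := abs_sub_comm _ _
      _ ≤ K * (V + δ) * V := this
  -- let δ → 0
  rw [← hKeq]
  have hfinal : ∀ ε > 0, |H (γ 0) - H (γ 1)| ≤ K * (V * V) + ε := by
    intro ε hε
    set δ : ℝ := min δ0 (ε / (K * V + 1)) with hδdef
    have hδpos : 0 < δ := lt_min hδ0 (div_pos hε (by nlinarith [mul_nonneg hK0 hV0]))
    have hδle : δ ≤ δ0 := min_le_left _ _
    have h2 : δ ≤ ε / (K * V + 1) := min_le_right _ _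
    have h3 := key δ hδpos hδle
    have hKV : 0 ≤ K * V := mul_nonneg hK0 hV0
    have h4 : K * V * δ ≤ ε := by
      rw [le_div_iff₀ (by linarith : (0:ℝ) < K * V + 1)] at h2
      nlinarith [hδpos.le]
    have h5 : K * (V + δ) * V = K * (V * V) + K * V * δ := by ring
    linarith [h3, h4]
  exact le_of_forall_sub_le fun ε hε => by linarith [hfinal ε hε]

lemma const_of_fderiv_zero {n : ℕ} {Ω : Set (En n)} (hopen : IsOpen Ω)
    (hconn : IsPreconnected Ω) {f : En n → ℝ}
    (hfd : ∀ z ∈ Ω, DifferentiableAt ℝ f z) (hf0 : ∀ z ∈ Ω, fderiv ℝ f z = 0)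
    {x y : En n} (hx : x ∈ Ω) (hy : y ∈ Ω) : f x = f y := by
  have hloc : ∀ z ∈ Ω, ∃ r > 0, ball z r ⊆ Ω ∧ ∀ w ∈ ball z r, f w = f z := by
    intro z hz
    obtain ⟨r, hr, hball⟩ := Metric.isOpen_iff.mp hopen z hz
    refine ⟨r, hr, hball, fun w hw => ?_⟩
    have := Convex.norm_image_sub_le_of_norm_fderiv_le (f := f) (C := 0)
      (fun v hv => hfd v (hball hv))
      (fun v hv => by rw [hf0 v (hball hv)]; simp)
      (convex_ball _ _) (mem_ball_self hr) hw
    simp only [zero_mul, Real.norm_eq_abs] at this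
    have h2 : |f w - f z| = 0 := le_antisymm this (abs_nonneg _)
    have := abs_eq_zero.mp h2
    linarith
  set S : Set (En n) := {z | z ∈ Ω ∧ f z = f y} with hS
  set T : Set (En n) := {z | z ∈ Ω ∧ f z ≠ f y} with hT
  have hSopen : IsOpen S := by
    rw [Metric.isOpen_iff]
    rintro z ⟨hzΩ, hzf⟩
    obtain ⟨r, hr, hball, hconst⟩ := hloc z hzΩ
    exact ⟨r, hr, fun w hw => ⟨hball hw, (hconst w hw).trans hzf⟩⟩
  have hTopen : IsOpen T := by
    rw [Metric.isOpen_iff]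
    rintro z ⟨hzΩ, hzf⟩
    obtain ⟨r, hr, hball, hconst⟩ := hloc z hzΩ
    exact ⟨r, hr, fun w hw => ⟨hball hw, by rw [hconst w hw]; exact hzf⟩⟩
  by_contra hne
  have hsub : Ω ⊆ S ∪ T := by
    intro z hz
    by_cases h : f z = f y
    · exact Or.inl ⟨hz, h⟩
    · exact Or.inr ⟨hz, h⟩
  obtain ⟨w, hwΩ, hwS, hwT⟩ := hconn S T hSopen hTopen hsub ⟨y, hy, hy, rfl⟩ ⟨x, hx, hx, hne⟩
  exact hwT.2 hwS.2

lemma remainder_zero {n : ℕ} {Ω : Set (En n)} (hopen : IsOpen Ω)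
    (hconn : IsPreconnected Ω) {F : En n → ℝ} (hF : ContDiffOn ℝ 2 F Ω)
    (hzero : ∀ i j : Fin n, ∀ z ∈ Ω, pd2 i j F z = 0)
    {x y : En n} (hx : x ∈ Ω) (hy : y ∈ Ω) :
    F x - F y - ip (grad F y) (x - y) = 0 := by
  classical
  set Gi : Fin n → En n → ℝ := fun i z => fderiv ℝ F z (Pi.single i 1) with hGi
  have hFd : ∀ z ∈ Ω, DifferentiableAt ℝ F z := fun z hz =>
    ((hF.differentiableOn two_ne_zero).differentiableAt (hopen.mem_nhds hz))
  have hfd : ContDiffOn ℝ 1 (fun z => fderiv ℝ F z) Ω :=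
    hF.fderiv_of_isOpen hopen le_rfl
  have hGd : ∀ i, ∀ z ∈ Ω, DifferentiableAt ℝ (Gi i) z := by
    intro i z hz
    exact ((hfd.clm_apply contDiffOn_const).differentiableOn one_ne_zero).differentiableAt
      (hopen.mem_nhds hz)
  have hGzero : ∀ i, ∀ z ∈ Ω, fderiv ℝ (Gi i) z = 0 := by
    intro i z hz
    ext w
    rw [clm_apply_eq_sum]
    rw [ContinuousLinearMap.zero_apply]
    refine Finset.sum_eq_zero fun j _ => ?_
    have : fderiv ℝ (Gi i) z (Pi.single j 1) = pd2 j i F z := rfl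
    rw [this, hzero j i z hz, mul_zero]
  have hGconst : ∀ i, ∀ z ∈ Ω, Gi i z = Gi i y := fun i z hz =>
    const_of_fderiv_zero hopen hconn (hGd i) (hGzero i) hz hy
  set g : En n := grad F y with hg
  set T : En n →L[ℝ] ℝ :=
    ∑ i, g i • (ContinuousLinearMap.proj (R := ℝ) (φ := fun _ : Fin n => ℝ) i) with hT
  have hTapp : ∀ w, T w = ip g w := by
    intro w
    simp only [hT, ContinuousLinearMap.sum_apply, ContinuousLinearMap.smul_apply,
      ContinuousLinearMap.proj_apply, ip, smul_eq_mul]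
  have hTsingle : ∀ i, T (Pi.single i 1) = g i := by
    intro i
    rw [hTapp]
    simp [ip, Pi.single_apply]
  set H : En n → ℝ := fun z => F z - T z with hH
  have hHd : ∀ z ∈ Ω, DifferentiableAt ℝ H z := fun z hz =>
    (hFd z hz).sub (T.differentiableAt)
  have hHzero : ∀ z ∈ Ω, fderiv ℝ H z = 0 := by
    intro z hz
    have hHderiv : fderiv ℝ H z = fderiv ℝ F z - T := by
      rw [hH, fderiv_fun_sub (hFd z hz) T.differentiableAt, T.fderiv]
    rw [hHderiv]
    ext w
    rw [clm_apply_eq_sum, ContinuousLinearMap.zero_apply]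
    refine Finset.sum_eq_zero fun i _ => ?_
    rw [ContinuousLinearMap.sub_apply, hTsingle]
    have h1 : fderiv ℝ F z (Pi.single i 1) = Gi i z := rfl
    have h2 : g i = Gi i y := rfl
    rw [h1, h2, hGconst i z hz, sub_self, mul_zero]
  have hHxy : H x = H y := const_of_fderiv_zero hopen hconn hHd hHzero hx hy
  have hTxy := hTapp (x - y)
  rw [map_sub] at hTxy
  simp only [hH] at hHxy
  linarith [hHxy, hTxy]

lemma pd2_symm {n : ℕ} {Ω : Set (En n)} (hopen : IsOpen Ω) {F : En n → ℝ}
    (hF : ContDiffOn ℝ 2 F Ω) {z : En n} (hz : z ∈ Ω) (i j : Fin n) :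
    pd2 i j F z = pd2 j i F z := by
  have hct : ContDiffAt ℝ 2 F z := hF.contDiffAt (hopen.mem_nhds hz)
  have hsym := hct.isSymmSndFDerivAt (by simp)
  have hdF : DifferentiableAt ℝ (fun w => fderiv ℝ F w) z :=
    ((hF.fderiv_of_isOpen hopen le_rfl).differentiableOn one_ne_zero).differentiableAt
      (hopen.mem_nhds hz)
  have key : ∀ v : En n, fderiv ℝ (fun y => fderiv ℝ F y v) z =
      (fderiv ℝ (fun w => fderiv ℝ F w) z).flip v := by
    intro v
    rw [fderiv_clm_apply hdF (differentiableAt_const v)]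
    simp
  unfold pd2
  rw [key, key]
  simp only [ContinuousLinearMap.flip_apply]
  exact hsym _ _

theorem stmt5 {n : ℕ} (Ω : Set (En n)) (hopen : IsOpen Ω) (hconn : IsConnected Ω)
    (F : En n → ℝ) (hF : ContDiffOn ℝ 2 F Ω)
    (hbdd : ∀ i j : Fin n, BddAbove ((fun x => |pd2 i j F x|) '' Ω))
    (x y : En n) (hx : x ∈ Ω) (hy : y ∈ Ω) :
    ENNReal.ofReal |F x - F y - ip (grad F y) (x - y)| ≤
      (n : ENNReal) * ENNReal.ofReal (C2norm Ω F) * (dOmega Ω x y) ^ 2 := by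
  classical
  have hne : Ω.Nonempty := hconn.nonempty
  have hpre : IsPreconnected Ω := hconn.isPreconnected
  rcases Nat.eq_zero_or_pos n with hn0 | hn
  · subst hn0
    have hxy : x = y := Subsingleton.elim x y
    subst hxy
    simp [ip]
  set A : Fin n → Fin n → ℝ := fun i j => sSup ((fun x => |pd2 i j F x|) '' Ω) with hA
  have hA0 : ∀ i j, 0 ≤ A i j := by
    intro i j
    apply Real.sSup_nonneg
    rintro x ⟨z, hz, rfl⟩
    exact abs_nonneg _
  have hAle : ∀ i j, ∀ z ∈ Ω, |pd2 i j F z| ≤ A i j := fun i j z hz =>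
    le_csSup (hbdd i j) ⟨z, hz, rfl⟩
  have hAsym : ∀ i j, A i j = A j i := by
    intro i j
    simp only [hA]
    congr 1
    apply Set.image_congr
    intro z hz
    rw [pd2_symm hopen hF hz i j]
  have hC2eq : C2norm Ω F =
      ∑ p ∈ Finset.univ.filter (fun p : Fin n × Fin n => p.1 ≤ p.2), A p.1 p.2 := by
    unfold C2norm
    refine Finset.sum_congr rfl fun p _ => ?_
    exact biSup_eq hne (hbdd p.1 p.2) (fun z _ => abs_nonneg _)
  have hC0 : 0 ≤ C2norm Ω F := by
    rw [hC2eq]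
    exact Finset.sum_nonneg fun p _ => hA0 p.1 p.2
  set K : ℝ := ∑ p : Fin n × Fin n, A p.1 p.2 with hK
  have hK0 : 0 ≤ K := Finset.sum_nonneg fun p _ => hA0 p.1 p.2
  have hKle : K ≤ n * C2norm Ω F := by
    have hsplit : K = (∑ p ∈ Finset.univ.filter (fun p : Fin n × Fin n => p.1 ≤ p.2), A p.1 p.2)
        + ∑ p ∈ Finset.univ.filter (fun p : Fin n × Fin n => ¬ p.1 ≤ p.2), A p.1 p.2 :=
      (Finset.sum_filter_add_sum_filter_not _ _ _).symm
    have hswap : ∑ p ∈ Finset.univ.filter (fun p : Fin n × Fin n => ¬ p.1 ≤ p.2), A p.1 p.2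
        = ∑ p ∈ Finset.univ.filter (fun p : Fin n × Fin n => p.1 < p.2), A p.1 p.2 := by
      refine Finset.sum_nbij' (fun p => (p.2, p.1)) (fun p => (p.2, p.1)) ?_ ?_ ?_ ?_ ?_
      · intro p hp
        simp only [Finset.mem_filter, Finset.mem_univ, true_and, not_le] at hp ⊢
        exact hp
      · intro p hp
        simp only [Finset.mem_filter, Finset.mem_univ, true_and, not_le] at hp ⊢
        exact hp
      · intro p _; rfl
      · intro p _; rfl
      · intro p _
        exact hAsym p.1 p.2
    have hlt_le : ∑ p ∈ Finset.univ.filter (fun p : Fin n × Fin n => p.1 < p.2), A p.1 p.2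
        ≤ ∑ p ∈ Finset.univ.filter (fun p : Fin n × Fin n => p.1 ≤ p.2), A p.1 p.2 := by
      have hsub : Finset.univ.filter (fun p : Fin n × Fin n => p.1 < p.2) ⊆
          Finset.univ.filter (fun p : Fin n × Fin n => p.1 ≤ p.2) := by
        intro p hp
        simp only [Finset.mem_filter, Finset.mem_univ, true_and] at hp ⊢
        exact le_of_lt hp
      exact Finset.sum_le_sum_of_subset_of_nonneg hsub (fun p _ _ => hA0 p.1 p.2)
    rcases lt_or_ge n 2 with h2 | h2
    · have hn1 : n = 1 := by omega
      subst hn1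
      have hempty : ∑ p ∈ Finset.univ.filter (fun p : Fin 1 × Fin 1 => p.1 < p.2), A p.1 p.2
          = 0 := by
        apply Finset.sum_eq_zero
        intro p hp
        simp only [Finset.mem_filter] at hp
        exact absurd hp.2 (by omega)
      rw [hsplit, hswap, hempty, ← hC2eq]
      push_cast
      linarith
    · have : K ≤ 2 * C2norm Ω F := by
        rw [hsplit, hswap, ← hC2eq]
        linarith [hlt_le.trans_eq hC2eq.symm]
      refine this.trans ?_
      have : (2:ℝ) ≤ n := by exact_mod_cast h2
      nlinarith
  by_cases hCz : C2norm Ω F = 0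
  · have hAz : ∀ i j : Fin n, i ≤ j → A i j = 0 := by
      intro i j hij
      have := (Finset.sum_eq_zero_iff_of_nonneg (fun p _ => hA0 p.1 p.2)).mp
        (hC2eq ▸ hCz) (i, j) (by simp [hij])
      exact this
    have hzero : ∀ i j : Fin n, ∀ z ∈ Ω, pd2 i j F z = 0 := by
      intro i j z hz
      rcases le_total i j with hij | hji
      · have := (hAle i j z hz).trans_eq (hAz i j hij)
        exact abs_eq_zero.mp (le_antisymm this (abs_nonneg _))
      · rw [pd2_symm hopen hF hz i j]
        have := (hAle j i z hz).trans_eq (hAz j i hji)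
        exact abs_eq_zero.mp (le_antisymm this (abs_nonneg _))
    rw [remainder_zero hopen hpre hF hzero hx hy]
    simp
  · have hCpos : 0 < C2norm Ω F := lt_of_le_of_ne hC0 (Ne.symm hCz)
    by_cases hd : dOmega Ω x y = ⊤
    · rw [hd]
      have h1 : ((n : ENNReal) * ENNReal.ofReal (C2norm Ω F)) ≠ 0 := by
        exact mul_ne_zero (by exact_mod_cast Nat.cast_ne_zero.mpr hn.ne')
          (ENNReal.ofReal_pos.mpr hCpos).ne'
      rw [show ((⊤:ENNReal))^2 = ⊤ by simp]
      rw [ENNReal.mul_top h1]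
      exact le_top
    · refine ENNReal.le_of_forall_pos_le_add fun ε hε _ => ?_
      set D : ℝ := (dOmega Ω x y).toReal with hD
      have hD0 : 0 ≤ D := ENNReal.toReal_nonneg
      have hdofD : ENNReal.ofReal D = dOmega Ω x y := ENNReal.ofReal_toReal hd
      set C : ℝ := C2norm Ω F with hC
      set η : ℝ := min 1 ((ε:ℝ) / (n * C * (2*D+1) + 1)) with hηdef
      have hden : (0:ℝ) < n * C * (2*D+1) + 1 := by positivity
      have hη0 : 0 < η := lt_min one_pos (div_pos (by exact_mod_cast hε) hden)
      have hη1 : η ≤ 1 := min_le_left _ _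
      have hlt2 : dOmega Ω x y < dOmega Ω x y + ENNReal.ofReal η :=
        ENNReal.lt_add_right hd (ENNReal.ofReal_pos.mpr hη0).ne'
      have hex : ∃ γ : ℝ → En n, (ContinuousOn γ (Set.Icc 0 1) ∧ γ 0 = x ∧ γ 1 = y ∧
          Set.MapsTo γ (Set.Icc 0 1) Ω) ∧
          eVariationOn γ (Set.Icc 0 1) < dOmega Ω x y + ENNReal.ofReal η := by
        have h1 : (⨅ γ ∈ {γ : ℝ → En n | ContinuousOn γ (Set.Icc 0 1) ∧ γ 0 = x ∧ γ 1 = y ∧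
            Set.MapsTo γ (Set.Icc 0 1) Ω}, eVariationOn γ (Set.Icc 0 1))
            < dOmega Ω x y + ENNReal.ofReal η := hlt2
        simp only [iInf_lt_iff] at h1
        obtain ⟨γ, hγS, hγlt⟩ := h1
        exact ⟨γ, hγS, hγlt⟩
      obtain ⟨γ, ⟨hγc, hγ0, hγ1, hγm⟩, hγlt⟩ := hex
      have hVbound : eVariationOn γ (Set.Icc 0 1) ≤ ENNReal.ofReal (D + η) := by
        rw [ENNReal.ofReal_add hD0 hη0.le, hdofD]
        exact hγlt.le
      have hmain := curve_bound hopen hF hbdd hγc hγm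
        (V := D + η) (by positivity) hVbound
      rw [hγ0, hγ1] at hmain
      have hreal : |F x - F y - ip (grad F y) (x - y)| ≤ n * C * (D * D) + ε := by
        have h2 : K * ((D+η)*(D+η)) ≤ n * C * ((D+η)*(D+η)) := by
          apply mul_le_mul_of_nonneg_right (hKle.trans_eq rfl) (by positivity)
        have h3 : η ≤ (ε:ℝ) / (n * C * (2*D+1) + 1) := min_le_right _ _
        have h4 : n * C * (2*D+1) * η ≤ ε := by
          rw [le_div_iff₀ hden] at h3
          have hBη : η * (n * C * (2*D+1) + 1) = n * C * (2*D+1) * η + η := by ring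
          linarith [h3, hη0.le]
        have h5 : n * C * ((D+η)*(D+η)) ≤ n * C * (D*D) + n * C * (2*D+1) * η := by
          have hnC : (0:ℝ) ≤ n * C := mul_nonneg (Nat.cast_nonneg n) hC0
          have hpos : 0 ≤ n * C * (η * (1 - η)) :=
            mul_nonneg hnC (mul_nonneg hη0.le (by linarith))
          have heq : n * C * ((D+η)*(D+η)) =
              n * C * (D*D) + n * C * (2*D+1) * η - n * C * (η * (1 - η)) := by ring
          linarith [hpos, heq]
        have hmainK : |F x - F y - ip (grad F y) (x - y)| ≤ K * ((D+η)*(D+η)) := hmain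
        calc |F x - F y - ip (grad F y) (x - y)| ≤ K * ((D+η)*(D+η)) := hmainK
          _ ≤ n * C * ((D+η)*(D+η)) := h2
          _ ≤ n * C * (D*D) + n * C * (2*D+1) * η := h5
          _ ≤ n * C * (D*D) + ε := by linarith [h4]
      calc ENNReal.ofReal |F x - F y - ip (grad F y) (x - y)|
          ≤ ENNReal.ofReal (n * C * (D * D) + ε) := ENNReal.ofReal_le_ofReal hreal
        _ = ENNReal.ofReal (n * C * (D * D)) + ENNReal.ofReal ε :=
            ENNReal.ofReal_add (by positivity) (ε : NNReal).coe_nonneg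
        _ = (n : ENNReal) * ENNReal.ofReal C * (dOmega Ω x y) ^ 2 + ε := by
            rw [ENNReal.ofReal_coe_nnreal]
            congr 1
            rw [ENNReal.ofReal_mul (by positivity), ENNReal.ofReal_mul (by positivity),
              ENNReal.ofReal_mul hD0, ENNReal.ofReal_natCast, hdofD, sq]
end

section
/- Let Ω ⊆ ℝⁿ be a domain, let x, y be points in Ω, and suppose there exist open axis-parallel boxes U, V ⊆ Ω with x ∈ U, y ∈ V, U ∩ V ≠ ∅, and such that the smallest axis-parallel box containing {x, y} intersects both U and V. Then the intrinsic distance satisfies d_Ω(x, y) ≤ 2 ‖x − y‖_∞. -/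
/-- The open axis-parallel box `Π_i (a i, b i)` in `ℝⁿ`. -/
def obox {n : ℕ} (a b : En n) : Set (En n) :=
  Set.pi Set.univ fun i => Set.Ioo (a i) (b i)

/-- The smallest closed axis-parallel box containing `{x, y}`. -/
def hullBox {n : ℕ} (x y : En n) : Set (En n) :=
  Set.pi Set.univ fun i => Set.Icc (min (x i) (y i)) (max (x i) (y i))

/-- The median of three reals is between each pair. -/
lemma median_between (p q r : ℝ) :
    (min p q ≤ max (min p q) (max (min q r) (min p r)) ∧
      max (min p q) (max (min q r) (min p r)) ≤ max p q) ∧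
    (min q r ≤ max (min p q) (max (min q r) (min p r)) ∧
      max (min p q) (max (min q r) (min p r)) ≤ max q r) ∧
    (min p r ≤ max (min p q) (max (min q r) (min p r)) ∧
      max (min p q) (max (min q r) (min p r)) ≤ max p r) := by
  rcases le_total p q with h1 | h1 <;> rcases le_total q r with h2 | h2 <;>
    rcases le_total p r with h3 | h3 <;>
    simp [min_def, max_def, *] <;> constructor <;> intros <;> linarith

theorem stmt11 {n : ℕ} (Ω : Set (En n)) (hopen : IsOpen Ω) (hconn : IsConnected Ω)
    (x y : En n) (hx : x ∈ Ω) (hy : y ∈ Ω)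
    (u₁ u₂ v₁ v₂ : En n)
    (hU : obox u₁ u₂ ⊆ Ω) (hV : obox v₁ v₂ ⊆ Ω)
    (hxU : x ∈ obox u₁ u₂) (hyV : y ∈ obox v₁ v₂)
    (hUV : (obox u₁ u₂ ∩ obox v₁ v₂).Nonempty)
    (hPU : (hullBox x y ∩ obox u₁ u₂).Nonempty)
    (hPV : (hullBox x y ∩ obox v₁ v₂).Nonempty) :
    dOmega Ω x y ≤ ENNReal.ofReal (2 * ‖x - y‖) := by
  classical
  obtain ⟨p, hpU, hpV⟩ := hUV
  obtain ⟨q, hqP, hqU⟩ := hPU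
  obtain ⟨r, hrP, hrV⟩ := hPV
  -- the common point
  set a : En n := fun i => max (min (p i) (q i)) (max (min (q i) (r i)) (min (p i) (r i)))
    with ha_def
  have haU : a ∈ obox u₁ u₂ := by
    intro i _
    have hp := hpU i (Set.mem_univ i)
    have hq := hqU i (Set.mem_univ i)
    obtain ⟨⟨h1, h2⟩, -, -⟩ := median_between (p i) (q i) (r i)
    exact ⟨lt_of_lt_of_le (lt_min hp.1 hq.1) h1, lt_of_le_of_lt h2 (max_lt hp.2 hq.2)⟩
  have haV : a ∈ obox v₁ v₂ := by
    intro i _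
    have hp := hpV i (Set.mem_univ i)
    have hr := hrV i (Set.mem_univ i)
    obtain ⟨-, -, h1, h2⟩ := median_between (p i) (q i) (r i)
    exact ⟨lt_of_lt_of_le (lt_min hp.1 hr.1) h1, lt_of_le_of_lt h2 (max_lt hp.2 hr.2)⟩
  have haP : a ∈ hullBox x y := by
    intro i _
    have hq := hqP i (Set.mem_univ i)
    have hr := hrP i (Set.mem_univ i)
    obtain ⟨-, ⟨h1, h2⟩, -⟩ := median_between (p i) (q i) (r i)
    exact ⟨le_trans (le_min hq.1 hr.1) h1, le_trans h2 (max_le hq.2 hr.2)⟩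
  -- norm estimates
  have habs : ∀ i, |x i - y i| = max (x i) (y i) - min (x i) (y i) := by
    intro i; rcases le_total (x i) (y i) with h | h <;>
      simp [abs_sub_comm, abs_of_nonneg, abs_of_nonpos, min_def, max_def, *] <;> linarith
  have hxa : ‖x - a‖ ≤ ‖x - y‖ := by
    rw [pi_norm_le_iff_of_nonneg (norm_nonneg _)]
    intro i
    have h := haP i (Set.mem_univ i)
    have h2 : ‖(x - y) i‖ ≤ ‖x - y‖ := norm_le_pi_norm (x - y) i
    simp only [Pi.sub_apply, Real.norm_eq_abs] at h2 ⊢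
    have hb := habs i
    have h3 : |x i - a i| ≤ |x i - y i| := by
      rw [hb, abs_sub_le_iff]
      constructor <;>
        [linarith [h.1, h.2, min_le_left (x i) (y i), le_max_left (x i) (y i)];
         linarith [h.1, h.2, min_le_left (x i) (y i), le_max_left (x i) (y i)]]
    linarith
  have hya : ‖y - a‖ ≤ ‖x - y‖ := by
    rw [pi_norm_le_iff_of_nonneg (norm_nonneg _)]
    intro i
    have h := haP i (Set.mem_univ i)
    have h2 : ‖(x - y) i‖ ≤ ‖x - y‖ := norm_le_pi_norm (x - y) i
    simp only [Pi.sub_apply, Real.norm_eq_abs] at h2 ⊢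
    have hb := habs i
    have h3 : |y i - a i| ≤ |x i - y i| := by
      rw [hb, abs_sub_le_iff]
      constructor <;>
        [linarith [h.1, h.2, min_le_right (x i) (y i), le_max_right (x i) (y i)];
         linarith [h.1, h.2, min_le_right (x i) (y i), le_max_right (x i) (y i)]]
    linarith
  -- the path
  set γ : ℝ → En n := fun t =>
    if t ≤ 1 / 2 then x + (2 * t) • (a - x) else a + (2 * t - 1) • (y - a) with hγ_def
  have hcont : Continuous γ := by
    apply Continuous.if_le
    · exact continuous_const.add ((continuous_const.mul continuous_id).smul continuous_const)
    · exact continuous_const.add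
        (((continuous_const.mul continuous_id).sub continuous_const).smul continuous_const)
    · exact continuous_id
    · exact continuous_const
    · intro t ht
      subst ht
      norm_num
  have hγ0 : γ 0 = x := by simp [hγ_def]
  have hγ1 : γ 1 = y := by norm_num [hγ_def]
  have hmaps : Set.MapsTo γ (Set.Icc (0 : ℝ) 1) Ω := by
    intro t ht
    have hUconv : Convex ℝ (obox u₁ u₂) := convex_pi fun i _ => convex_Ioo _ _
    have hVconv : Convex ℝ (obox v₁ v₂) := convex_pi fun i _ => convex_Ioo _ _
    simp only [hγ_def]
    split_ifs with h
    · apply hU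
      have : x + (2 * t) • (a - x) = (1 - 2 * t) • x + (2 * t) • a := by module
      rw [this]
      exact hUconv hxU haU (by linarith [ht.1]) (by linarith [ht.1]) (by ring)
    · apply hV
      push_neg at h
      have : a + (2 * t - 1) • (y - a) = (1 - (2 * t - 1)) • a + (2 * t - 1) • y := by module
      rw [this]
      exact hVconv haV hyV (by linarith [ht.2]) (by linarith) (by ring)
  -- Lipschitz estimate
  set C : ℝ := 2 * ‖x - y‖ with hC_def
  have hC0 : 0 ≤ C := by positivity
  have key : ∀ s ∈ Set.Icc (0:ℝ) 1, ∀ t ∈ Set.Icc (0:ℝ) 1, s ≤ t →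
      dist (γ s) (γ t) ≤ C * dist s t := by
    intro s hs t ht hst
    have hdq : dist s t = t - s := by rw [Real.dist_eq, abs_of_nonpos (by linarith)]; ring
    by_cases h1 : s ≤ 1 / 2 <;> by_cases h2 : t ≤ 1 / 2
    · have : γ s - γ t = (2 * s - 2 * t) • (a - x) := by
        simp only [hγ_def, if_pos h1, if_pos h2]; module
      rw [dist_eq_norm, this, norm_smul, Real.norm_eq_abs,
        abs_of_nonpos (by linarith), hdq]
      have : ‖a - x‖ ≤ ‖x - y‖ := by rw [norm_sub_rev]; exact hxa
      nlinarith [norm_nonneg (a - x)]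
    · -- mixed case
      have e1 : γ s - a = (2 * s - 1) • (a - x) := by
        simp only [hγ_def, if_pos h1]; module
      have e2 : a - γ t = -((2 * t - 1) • (y - a)) := by
        simp only [hγ_def, if_neg h2]; module
      have d1 : dist (γ s) a ≤ (1 - 2 * s) * ‖x - y‖ := by
        rw [dist_eq_norm, e1, norm_smul, Real.norm_eq_abs, abs_of_nonpos (by linarith)]
        have : ‖a - x‖ ≤ ‖x - y‖ := by rw [norm_sub_rev]; exact hxa
        nlinarith [norm_nonneg (a - x)]
      have d2 : dist a (γ t) ≤ (2 * t - 1) * ‖x - y‖ := by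
        push_neg at h2
        rw [dist_eq_norm, e2, norm_neg, norm_smul, Real.norm_eq_abs,
          abs_of_nonneg (by linarith)]
        nlinarith [norm_nonneg (y - a), hya]
      calc dist (γ s) (γ t) ≤ dist (γ s) a + dist a (γ t) := dist_triangle _ _ _
        _ ≤ (1 - 2 * s) * ‖x - y‖ + (2 * t - 1) * ‖x - y‖ := by linarith
        _ = C * dist s t := by rw [hdq, hC_def]; ring
    · exact absurd (hst.trans h2) h1
    · have : γ s - γ t = (2 * s - 2 * t) • (y - a) := by
        simp only [hγ_def, if_neg h1, if_neg h2]; module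
      rw [dist_eq_norm, this, norm_smul, Real.norm_eq_abs,
        abs_of_nonpos (by linarith), hdq]
      nlinarith [norm_nonneg (y - a), hya]
  have hlip : LipschitzOnWith (Real.toNNReal C) γ (Set.Icc 0 1) := by
    rw [lipschitzOnWith_iff_dist_le_mul]
    intro s hs t ht
    rw [Real.coe_toNNReal _ hC0]
    rcases le_total s t with h | h
    · exact key s hs t ht h
    · rw [dist_comm (γ s), dist_comm s]; exact key t ht s hs h
  -- conclude
  have hvar : eVariationOn γ (Set.Icc 0 1) ≤ ENNReal.ofReal C := by
    calc eVariationOn γ (Set.Icc 0 1) = eVariationOn (γ ∘ id) (Set.Icc 0 1) := rfl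
      _ ≤ (Real.toNNReal C) * eVariationOn id (Set.Icc 0 1) :=
          hlip.comp_eVariationOn_le (Set.mapsTo_id _)
      _ ≤ (Real.toNNReal C) * ENNReal.ofReal 1 := by
          gcongr
          have hid : MonotoneOn (id : ℝ → ℝ) (Set.Icc 0 1) := monotone_id.monotoneOn _
          have := hid.eVariationOn_le (Set.left_mem_Icc.2 (by norm_num))
            (Set.right_mem_Icc.2 (by norm_num))
          simpa using this
      _ = ENNReal.ofReal C := by
          rw [ENNReal.ofReal_one, mul_one, ENNReal.ofReal]
  calc dOmega Ω x y ≤ eVariationOn γ (Set.Icc 0 1) :=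
        iInf₂_le γ ⟨hcont.continuousOn, hγ0, hγ1, hmaps⟩
    _ ≤ ENNReal.ofReal (2 * ‖x - y‖) := hvar
end

section
/- Let Ω ⊆ ℝⁿ be a domain, let W(Ω) be a Whitney covering of Ω, and let {φ_Q : Q ∈ W(Ω)} be a smooth partition of unity with supp φ_Q ⊆ (9/8)Q, Σ_Q φ_Q ≡ 1 on Ω, and |D^β φ_Q| ≤ C(n) (diam Q)^{−|β|} for |β| ≤ 2. Suppose P_Q ∈ P₁(ℝⁿ) are affine polynomials such that for all touching cubes Q, K ∈ W(Ω) (Q ∩ K ≠ ∅): sup_{x ∈ K} |P_Q(x) − P_K(x)| ≤ η (diam Q)² and ‖∇P_Q − ∇P_K‖_∞ ≤ η (diam Q + diam K). Then F := Σ_Q φ_Q P_Q belongs to C²(Ω) and ‖F‖_{C²(Ω)} ≤ γ(n) η for a constant γ(n) depending only on n. -/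
/-- Distance between two sets (in the ∞-norm metric of `En n`). -/
noncomputable def setDist {n : ℕ} (A B : Set (En n)) : ℝ :=
  sInf {d : ℝ | ∃ a ∈ A, ∃ b ∈ B, d = dist a b}

namespace Aux

noncomputable def ipL {n : ℕ} (v : En n) : En n →L[ℝ] ℝ :=
  ∑ k, v k • (ContinuousLinearMap.proj k : (Fin n → ℝ) →L[ℝ] ℝ)
lemma ipL_apply {n : ℕ} (v w : En n) : ipL v w = ip v w := by
  simp [ipL, ip, ContinuousLinearMap.sum_apply]
lemma ip_single {n : ℕ} (v : En n) (j : Fin n) : ip v (Pi.single j 1) = v j := by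
  simp [ip, Pi.single_apply, mul_ite]
lemma hasFDerivAt_affine {n : ℕ} (q : ℝ) (v : En n) (x : En n) :
    HasFDerivAt (fun y => q + ip v y) (ipL v) x := by
  have h := ((ipL v).hasFDerivAt (x := x)).const_add q
  simpa only [ipL_apply] using h
lemma norm_single_one {n : ℕ} (i : Fin n) : ‖(Pi.single i (1:ℝ) : En n)‖ = 1 := by
  rw [Pi.norm_single]; norm_num

lemma diff_inner {n : ℕ} {φ : En n → ℝ} (hφ : ContDiff ℝ (⊤ : ℕ∞) φ) (b : Fin n) :
    Differentiable ℝ (fun y : En n => fderiv ℝ φ y (Pi.single b 1)) := by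
  have h1 : Differentiable ℝ (fderiv ℝ φ) :=
    (hφ.fderiv_right (m := 1) (by exact WithTop.coe_le_coe.mpr (le_top : ((1 + 1 : ℕ) : ℕ∞) ≤ ⊤))).differentiable one_ne_zero
  exact h1.clm_apply (differentiable_const _)

lemma pd2_mul_affine {n : ℕ} {φ : En n → ℝ} (hφ : ContDiff ℝ (⊤ : ℕ∞) φ)
    (a b : Fin n) (q : ℝ) (v : En n) (x : En n) :
    pd2 a b (fun y => φ y * (q + ip v y)) x =
      v b * fderiv ℝ φ x (Pi.single a 1) + v a * fderiv ℝ φ x (Pi.single b 1)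
        + (q + ip v x) * pd2 a b φ x := by
  have hφd : Differentiable ℝ φ := hφ.differentiable (by simp)
  have h2 : (fun y => fderiv ℝ (fun z => φ z * (q + ip v z)) y (Pi.single b 1))
      = fun y => φ y * v b + (q + ip v y) * fderiv ℝ φ y (Pi.single b 1) := by
    funext y
    rw [(show HasFDerivAt (fun z => φ z * (q + ip v z)) _ y from
      (hφd y).hasFDerivAt.mul' (hasFDerivAt_affine q v y)).fderiv]
    simp [ContinuousLinearMap.smulRight_apply, ipL_apply, ip_single]
    ring
  rw [pd2, h2]
  have hw : DifferentiableAt ℝ (fun y : En n => fderiv ℝ φ y (Pi.single b 1)) x :=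
    (diff_inner hφ b) x
  have hA : HasFDerivAt (fun y => φ y * v b) (v b • fderiv ℝ φ x) x :=
    (hφd x).hasFDerivAt.mul_const (v b)
  have hB := (hasFDerivAt_affine q v x).mul' hw.hasFDerivAt
  rw [(show HasFDerivAt (fun y => φ y * v b + (q + ip v y) * fderiv ℝ φ y (Pi.single b 1)) _ x
    from hA.add hB).fderiv]
  simp only [ContinuousLinearMap.add_apply, ContinuousLinearMap.smul_apply,
    ContinuousLinearMap.smulRight_apply, ipL_apply, ip_single, smul_eq_mul, op_smul_eq_mul]
  rw [pd2]
  ring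

lemma pd2_sum {n : ℕ} {ι' : Type} (s : Finset ι') (f : ι' → En n → ℝ)
    (hf : ∀ i ∈ s, ContDiff ℝ (⊤ : ℕ∞) (f i)) (a b : Fin n) (x : En n) :
    pd2 a b (fun y => ∑ i ∈ s, f i y) x = ∑ i ∈ s, pd2 a b (f i) x := by
  have h1 : (fun y => fderiv ℝ (fun z => ∑ i ∈ s, f i z) y (Pi.single b 1))
      = fun y => ∑ i ∈ s, fderiv ℝ (f i) y (Pi.single b 1) := by
    funext y
    rw [fderiv_fun_sum (fun i hi => ((hf i hi).differentiable (by simp)) y)]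
    simp
  rw [pd2, h1, fderiv_fun_sum (fun i hi => (diff_inner (hf i hi) b) x)]
  simp [pd2]

lemma pd2_add {n : ℕ} {f h : En n → ℝ} (hf : ContDiff ℝ (⊤ : ℕ∞) f) (hh : ContDiff ℝ (⊤ : ℕ∞) h)
    (a b : Fin n) (x : En n) :
    pd2 a b (fun y => f y + h y) x = pd2 a b f x + pd2 a b h x := by
  have h1 : (fun y => fderiv ℝ (fun z => f z + h z) y (Pi.single b 1))
      = fun y => fderiv ℝ f y (Pi.single b 1) + fderiv ℝ h y (Pi.single b 1) := by
    funext y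
    rw [fderiv_fun_add ((hf.differentiable (by simp)) y) ((hh.differentiable (by simp)) y)]
    simp
  rw [pd2, h1, fderiv_fun_add ((diff_inner hf b) x) ((diff_inner hh b) x)]
  simp [pd2]

lemma pd2_congr {n : ℕ} {f h : En n → ℝ} {x : En n} (hfh : f =ᶠ[nhds x] h)
    (a b : Fin n) : pd2 a b f x = pd2 a b h x := by
  have h1 : (fun y => fderiv ℝ f y (Pi.single b 1)) =ᶠ[nhds x]
      (fun y => fderiv ℝ h y (Pi.single b 1)) := by
    filter_upwards [Filter.EventuallyEq.fderiv (𝕜 := ℝ) hfh] with y hy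
    rw [hy]
  rw [pd2, pd2, h1.fderiv_eq]

lemma fderiv_eventually_zero {n : ℕ} {φ : En n → ℝ} {x : En n}
    (hz : φ =ᶠ[nhds x] 0) (b : Fin n) : fderiv ℝ φ x (Pi.single b 1) = 0 := by
  rw [hz.fderiv_eq]
  change (fderiv ℝ (fun _ => (0:ℝ)) x) (Pi.single b 1) = 0
  rw [fderiv_const_apply]
  rfl

lemma pd2_eventually_zero {n : ℕ} {φ : En n → ℝ} {x : En n}
    (hz : φ =ᶠ[nhds x] 0) (a b : Fin n) : pd2 a b φ x = 0 := by
  rw [pd2_congr hz]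
  have h : (fun y : En n => fderiv ℝ (0 : En n → ℝ) y (Pi.single b 1)) = fun _ => (0:ℝ) := by
    funext y
    change (fderiv ℝ (fun _ => (0:ℝ)) y) (Pi.single b 1) = 0
    rw [fderiv_const_apply]
    rfl
  rw [pd2, h]
  simp [fderiv_const_apply]

lemma abs_fderiv_le {n : ℕ} (φ : En n → ℝ) (x : En n) (b : Fin n) :
    |fderiv ℝ φ x (Pi.single b 1)| ≤ ‖iteratedFDeriv ℝ 1 φ x‖ := by
  have h : fderiv ℝ φ x (Pi.single b 1)
      = iteratedFDeriv ℝ 1 φ x ![Pi.single b 1] := by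
    rw [iteratedFDeriv_one_apply]
    simp
  rw [h, ← Real.norm_eq_abs]
  calc ‖iteratedFDeriv ℝ 1 φ x ![Pi.single b 1]‖
      ≤ ‖iteratedFDeriv ℝ 1 φ x‖ * ∏ i : Fin 1, ‖(![Pi.single b 1] : Fin 1 → En n) i‖ :=
        (iteratedFDeriv ℝ 1 φ x).le_opNorm _
  _ = ‖iteratedFDeriv ℝ 1 φ x‖ := by simp [norm_single_one]

lemma abs_pd2_le {n : ℕ} {φ : En n → ℝ} (hφ : ContDiff ℝ (⊤ : ℕ∞) φ) (a b : Fin n) (x : En n) :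
    |pd2 a b φ x| ≤ ‖iteratedFDeriv ℝ 2 φ x‖ := by
  have hd : DifferentiableAt ℝ (fderiv ℝ φ) x :=
    ((hφ.fderiv_right (m := 1) (by exact WithTop.coe_le_coe.mpr (le_top : ((1 + 1 : ℕ) : ℕ∞) ≤ ⊤))).differentiable one_ne_zero) x
  have h1 : pd2 a b φ x = iteratedFDeriv ℝ 2 φ x ![Pi.single a 1, Pi.single b 1] := by
    rw [iteratedFDeriv_two_apply]
    rw [pd2]
    rw [fderiv_clm_apply hd (differentiableAt_const _)]
    simp
  rw [h1, ← Real.norm_eq_abs]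
  calc ‖iteratedFDeriv ℝ 2 φ x ![Pi.single a 1, Pi.single b 1]‖
      ≤ ‖iteratedFDeriv ℝ 2 φ x‖ *
        ∏ i : Fin 2, ‖(![Pi.single a 1, Pi.single b 1] : Fin 2 → En n) i‖ :=
        (iteratedFDeriv ℝ 2 φ x).le_opNorm _
  _ = ‖iteratedFDeriv ℝ 2 φ x‖ := by
      rw [Fin.prod_univ_two]
      simp [norm_single_one]
lemma ip_sub_left {n : ℕ} (u v w : En n) : ip (u - v) w = ip u w - ip v w := by
  simp [ip, sub_mul, Finset.sum_sub_distrib]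

lemma ip_sub_right {n : ℕ} (u v w : En n) : ip u (v - w) = ip u v - ip u w := by
  simp [ip, mul_sub, Finset.sum_sub_distrib]

lemma abs_ip_le {n : ℕ} (v w : En n) : |ip v w| ≤ n * ‖v‖ * ‖w‖ := by
  calc |ip v w| ≤ ∑ k : Fin n, |v k * w k| := Finset.abs_sum_le_sum_abs _ _
  _ ≤ ∑ _k : Fin n, ‖v‖ * ‖w‖ := by
      refine Finset.sum_le_sum fun k _ => ?_
      rw [abs_mul]
      have h1 : |v k| ≤ ‖v‖ := norm_le_pi_norm v k
      have h2 : |w k| ≤ ‖w‖ := norm_le_pi_norm w k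
      exact mul_le_mul h1 h2 (abs_nonneg _) (norm_nonneg _)
  _ = n * ‖v‖ * ‖w‖ := by simp [mul_assoc]

lemma contDiff_affine {n : ℕ} (q : ℝ) (v : En n) :
    ContDiff ℝ (⊤ : ℕ∞) (fun y => q + ip v y) := by
  have : (fun y : En n => q + ip v y) = fun y => q + ipL v y := by
    funext y; rw [ipL_apply]
  rw [this]
  exact contDiff_const.add (ipL v).contDiff

lemma fderiv_affine {n : ℕ} (q : ℝ) (v : En n) (x : En n) :
    fderiv ℝ (fun y => q + ip v y) x = ipL v := (hasFDerivAt_affine q v x).fderiv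

lemma pd2_affine {n : ℕ} (a b : Fin n) (q : ℝ) (v : En n) (x : En n) :
    pd2 a b (fun y => q + ip v y) x = 0 := by
  have h : (fun y : En n => fderiv ℝ (fun z => q + ip v z) y (Pi.single b 1))
      = fun _ => ipL v (Pi.single b 1) := by
    funext y; rw [fderiv_affine]
  rw [pd2, h, fderiv_fun_const]
  simp

/-- a segment avoiding the frontier of an open set, starting inside, stays inside -/
lemma seg_sub {n : ℕ} {Ω : Set (En n)} (hΩ : IsOpen Ω) {a b : En n} (ha : a ∈ Ω)
    (h : ∀ y ∈ segment ℝ a b, y ∉ frontier Ω) : segment ℝ a b ⊆ Ω := by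
  have hpc : IsPreconnected (segment ℝ a b) := (convex_segment a b).isPreconnected
  have hv : IsOpen (closure Ω)ᶜ := isClosed_closure.isOpen_compl
  have hdisj : Disjoint Ω (closure Ω)ᶜ :=
    Set.disjoint_compl_right_iff_subset.mpr subset_closure
  have hsub : segment ℝ a b ⊆ Ω ∪ (closure Ω)ᶜ := by
    intro y hy
    by_cases hyΩ : y ∈ Ω
    · exact Or.inl hyΩ
    by_cases hc : y ∈ closure Ω
    · exact absurd (by rw [hΩ.frontier_eq]; exact ⟨hc, hyΩ⟩) (h y hy)
    · exact Or.inr hc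
  exact hpc.subset_left_of_subset_union hΩ hv hdisj hsub ⟨a, left_mem_segment ℝ a b, ha⟩

/-- Grid counting lemma: indices whose "anchor ball" sits in a bounded box are few. -/
lemma grid_count {n : ℕ} {ι : Type} {N : ℕ} (x : En n) (s : ℝ) (hs : 0 < s) (M : ℕ)
    (T : Set ι) (A : En n → Set ι) (hA : ∀ z, (A z).Finite) (hAc : ∀ z, (A z).ncard ≤ N)
    (hT : ∀ k ∈ T, ∃ m : En n, (∀ l, |m l - x l| ≤ s * M) ∧
      (∀ z : En n, dist z m ≤ s / 2 → k ∈ A z)) :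
    T.Finite ∧ T.ncard ≤ (2 * M + 1) ^ n * N := by
  classical
  set V : Finset (Fin n → ℤ) := Fintype.piFinset (fun _ => Finset.Icc (-(M:ℤ)) M) with hV
  set grid : (Fin n → ℤ) → En n := fun v l => x l + s * v l with hgrid
  have key : ∀ k ∈ T, ∃ v ∈ V, k ∈ A (grid v) := by
    intro k hk
    obtain ⟨m, hm1, hm2⟩ := hT k hk
    refine ⟨fun l => round ((m l - x l) / s), ?_, ?_⟩
    · rw [hV, Fintype.mem_piFinset]
      intro l
      rw [Finset.mem_Icc]
      have h1 : |round ((m l - x l) / s)| ≤ (M:ℤ) := by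
        have h2 : |((round ((m l - x l) / s) : ℤ) : ℝ)| ≤ (M:ℝ) + 1/2 := by
          calc |((round ((m l - x l) / s) : ℤ) : ℝ)|
              ≤ |((m l - x l) / s)| + 1/2 := by
                have := abs_sub_round ((m l - x l) / s)
                have htri := abs_sub_abs_le_abs_sub
                  ((round ((m l - x l) / s) : ℝ)) ((m l - x l) / s)
                have := abs_sub_comm ((m l - x l) / s) ((round ((m l - x l) / s) : ℝ))
                nlinarith [abs_sub_round ((m l - x l) / s),
                  abs_sub_abs_le_abs_sub ((round ((m l - x l) / s) : ℝ)) ((m l - x l) / s)]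
          _ ≤ (M:ℝ) + 1/2 := by
                have : |((m l - x l) / s)| ≤ (M:ℝ) := by
                  rw [abs_div, abs_of_pos hs, div_le_iff₀ hs]
                  calc |m l - x l| ≤ s * M := hm1 l
                  _ = (M:ℝ) * s := by ring
                linarith
        have h4 : ((|round ((m l - x l) / s)| : ℤ) : ℝ) < (M:ℝ) + 1 := by
          rw [Int.cast_abs]
          linarith
        have h5 : |round ((m l - x l) / s)| < (M:ℤ) + 1 := by exact_mod_cast h4
        exact Int.lt_add_one_iff.mp h5
      exact abs_le.mp h1
    · apply hm2
      rw [dist_pi_le_iff (by positivity)]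
      intro l
      rw [Real.dist_eq]
      have he : grid (fun l' => round ((m l' - x l') / s)) l - m l
          = s * ((round ((m l - x l) / s) : ℝ) - (m l - x l) / s) := by
        simp only [hgrid]
        field_simp
        ring
      rw [he, abs_mul, abs_of_pos hs]
      have h7 := abs_sub_round ((m l - x l) / s)
      rw [abs_sub_comm] at h7
      nlinarith
  have hsubU : T ⊆ ⋃ v ∈ V, A (grid v) := by
    intro k hk
    obtain ⟨v, hv, hkv⟩ := key k hk
    exact Set.mem_biUnion hv hkv
  have hfin : T.Finite :=
    Set.Finite.subset (Set.Finite.biUnion V.finite_toSet (fun v _ => hA _)) hsubU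
  refine ⟨hfin, ?_⟩
  classical
  have hcard : T.ncard ≤ ∑ v ∈ V, (A (grid v)).ncard := by
    have h1 : hfin.toFinset ⊆ V.biUnion (fun v => (hA (grid v)).toFinset) := by
      intro k hk
      rw [Set.Finite.mem_toFinset] at hk
      obtain ⟨v, hv, hkv⟩ := key k hk
      exact Finset.mem_biUnion.mpr ⟨v, hv, (hA _).mem_toFinset.mpr hkv⟩
    calc T.ncard = hfin.toFinset.card := by
          rw [← Set.ncard_coe_finset, Set.Finite.coe_toFinset]
    _ ≤ (V.biUnion (fun v => (hA (grid v)).toFinset)).card := Finset.card_le_card h1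
    _ ≤ ∑ v ∈ V, (hA (grid v)).toFinset.card := Finset.card_biUnion_le
    _ = ∑ v ∈ V, (A (grid v)).ncard := by
          refine Finset.sum_congr rfl fun v _ => ?_
          rw [← Set.ncard_coe_finset, Set.Finite.coe_toFinset]
  calc T.ncard ≤ ∑ v ∈ V, (A (grid v)).ncard := hcard
  _ ≤ ∑ _v ∈ V, N := Finset.sum_le_sum fun v _ => hAc _
  _ = V.card * N := by rw [Finset.sum_const, smul_eq_mul]
  _ ≤ (2 * M + 1) ^ n * N := by
      apply Nat.mul_le_mul_right
      apply le_of_eq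
      rw [hV, Fintype.card_piFinset]
      have h6 : ∀ l : Fin n, (Finset.Icc (-(M:ℤ)) M).card = 2 * M + 1 := by
        intro l
        rw [Int.card_Icc]
        omega
      calc (∏ _l : Fin n, (Finset.Icc (-(M:ℤ)) M).card)
          = ∏ _l : Fin n, (2 * M + 1) := by
            exact Finset.prod_congr rfl fun l _ => h6 l
      _ = (2 * M + 1) ^ n := by
            rw [Finset.prod_const, Finset.card_univ, Fintype.card_fin]
lemma reachable_bound {V : Type} [Fintype V] [DecidableEq V] (G : SimpleGraph V) [DecidableRel G.Adj] (d : V → V → ℝ)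
    (hd0 : ∀ a, d a a = 0) (htri : ∀ a b c, d a c ≤ d a b + d b c)
    (Cst : ℝ) (hC : 0 ≤ Cst) (hadj : ∀ a b, G.Adj a b → d a b ≤ Cst)
    {a b : V} (h : G.Reachable a b) : d a b ≤ Fintype.card V * Cst := by
  have key : ∀ (u v : V) (w : G.Walk u v), d u v ≤ w.length * Cst := by
    intro u v w
    induction w with
    | nil => simp [hd0]
    | @cons u' v' w' hadj' p ih =>
        calc d u' w' ≤ d u' v' + d v' w' := htri _ _ _
        _ ≤ Cst + p.length * Cst := add_le_add (hadj _ _ hadj') ih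
        _ = ((p.length + 1 : ℕ) : ℝ) * Cst := by push_cast; ring
        _ = ((SimpleGraph.Walk.cons hadj' p).length : ℝ) * Cst := by
              rw [SimpleGraph.Walk.length_cons]
  obtain ⟨w⟩ := h
  calc d a b ≤ ((w.toPath : G.Walk a b).length : ℝ) * Cst := key a b _
  _ ≤ Fintype.card V * Cst := by
      apply mul_le_mul_of_nonneg_right _ hC
      exact_mod_cast le_of_lt w.toPath.2.length_lt

lemma chain_bound {ι : Type} (C : Set ι) (hfin : C.Finite)
    (touch : ι → ι → Prop) (hsymm : Symmetric touch)
    (d : ι → ι → ℝ) (hd0 : ∀ a, d a a = 0) (htri : ∀ a b c', d a c' ≤ d a b + d b c')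
    (Cst : ℝ) (hC : 0 ≤ Cst) (hadj : ∀ a b, a ∈ C → b ∈ C → touch a b → d a b ≤ Cst)
    {i j : ι} (h : Relation.ReflTransGen (fun a b => a ∈ C ∧ b ∈ C ∧ touch a b) i j)
    (hi : i ∈ C) :
    d i j ≤ C.ncard * Cst := by
  classical
  have hjC : j ∈ C := by
    induction h with
    | refl => exact hi
    | tail _ hr _ => exact hr.2.1
  set V := hfin.toFinset with hV
  let G : SimpleGraph V :=
    { Adj := fun a b => a ≠ b ∧ touch a.1 b.1
      symm := ⟨fun a b hab => ⟨hab.1.symm, hsymm hab.2⟩⟩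
      loopless := ⟨fun a ha => ha.1 rfl⟩ }
  have hreach : ∀ (k : ι) (hk : Relation.ReflTransGen
      (fun a b => a ∈ C ∧ b ∈ C ∧ touch a b) i k) (hkC : k ∈ C),
      G.Reachable ⟨i, hfin.mem_toFinset.mpr hi⟩ ⟨k, hfin.mem_toFinset.mpr hkC⟩ := by
    intro k hk
    induction hk with
    | refl => intro _; exact SimpleGraph.Reachable.refl _
    | @tail b c' hab hbc ih =>
        intro hcC
        have hbC : b ∈ C := hbc.1
        have h1 := ih hbC
        by_cases heq : b = c'
        · subst heq; exact h1
        · refine h1.trans (SimpleGraph.Adj.reachable ?_)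
          exact ⟨fun hx => heq (Subtype.mk_eq_mk.mp hx), hbc.2.2⟩
  have h2 := hreach j h hjC
  have := Classical.decEq ι
  have : DecidableRel G.Adj := Classical.decRel _
  have h3 := reachable_bound G (fun a b => d a.1 b.1) (fun a => hd0 a.1)
    (fun a b c' => htri a.1 b.1 c'.1) Cst hC
    (fun a b hab => hadj a.1 b.1 (hfin.mem_toFinset.mp a.2) (hfin.mem_toFinset.mp b.2) hab.2)
    h2
  calc d i j ≤ Fintype.card V * Cst := h3
  _ = C.ncard * Cst := by
      congr 1
      rw [Fintype.card_coe, hV, ← Set.ncard_coe_finset, Set.Finite.coe_toFinset]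

lemma cover_rtg {n : ℕ} {ι : Type} (S : Set (En n)) (hS : IsPreconnected S)
    (C : Set ι) (hCfin : C.Finite) (B : ι → Set (En n)) (hB : ∀ k, IsClosed (B k))
    (hcov : S ⊆ ⋃ k ∈ C, B k)
    {i j : ι} (hi : i ∈ C) (hj : j ∈ C)
    {pti ptj : En n} (hpti : pti ∈ B i ∩ S) (hptj : ptj ∈ B j ∩ S) :
    Relation.ReflTransGen (fun a b => a ∈ C ∧ b ∈ C ∧ (B a ∩ B b).Nonempty) i j := by
  classical
  set Rel : ι → ι → Prop := fun a b => a ∈ C ∧ b ∈ C ∧ (B a ∩ B b).Nonempty with hRel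
  set R : Set ι := {k | k ∈ C ∧ Relation.ReflTransGen Rel i k} with hR
  by_contra hcon
  have hjR : j ∉ R := fun hjr => hcon hjr.2
  set U := ⋃ k ∈ R, B k with hU
  set W := ⋃ k ∈ C \ R, B k with hW
  have hRfin : R.Finite := hCfin.subset (fun k hk => hk.1)
  have hUc : IsClosed U := hRfin.isClosed_biUnion (fun k _ => hB k)
  have hWc : IsClosed W := (hCfin.subset Set.diff_subset).isClosed_biUnion (fun k _ => hB k)
  have hcov2 : S ⊆ U ∪ W := by
    intro y hy
    obtain ⟨k, hkC, hky⟩ := Set.mem_iUnion₂.mp (hcov hy)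
    by_cases hkR : k ∈ R
    · exact Or.inl (Set.mem_biUnion hkR hky)
    · exact Or.inr (Set.mem_biUnion ⟨hkC, hkR⟩ hky)
  have hSU : (S ∩ U).Nonempty :=
    ⟨pti, hpti.2, Set.mem_biUnion ⟨hi, Relation.ReflTransGen.refl⟩ hpti.1⟩
  have hSW : (S ∩ W).Nonempty :=
    ⟨ptj, hptj.2, Set.mem_biUnion ⟨hj, hjR⟩ hptj.1⟩
  obtain ⟨y, _, hyU, hyW⟩ := isPreconnected_closed_iff.mp hS U W hUc hWc hcov2 hSU hSW
  obtain ⟨k, hkR, hky⟩ := Set.mem_iUnion₂.mp hyU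
  obtain ⟨k', hk'CR, hk'y⟩ := Set.mem_iUnion₂.mp hyW
  apply hk'CR.2
  exact ⟨hk'CR.1, hkR.2.tail ⟨hkR.1, hk'CR.1, ⟨y, hky, hk'y⟩⟩⟩

end Aux

set_option maxHeartbeats 3000000 in
open Metric Aux in
theorem stmt16 (n : ℕ) (Cn : ℝ) (hCn : 0 < Cn) (N : ℕ) :
    ∃ γ : ℝ, 0 < γ ∧
      ∀ (Ω : Set (En n)) (ι : Type) (c : ι → En n) (r : ι → ℝ)
        (φ : ι → En n → ℝ) (p : ι → ℝ) (g : ι → En n) (η : ℝ),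
        IsOpen Ω → IsConnected Ω → Ω ≠ Set.univ → 0 ≤ η →
        (∀ i, 0 < r i) →
        -- Whitney covering: the cubes cover Ω
        (Ω = ⋃ i, Metric.closedBall (c i) (r i)) →
        -- Whitney property: diam Q ≤ dist(Q, ∂Ω) ≤ 4 diam Q
        (∀ i, 2 * r i ≤ setDist (Metric.closedBall (c i) (r i)) (frontier Ω) ∧
              setDist (Metric.closedBall (c i) (r i)) (frontier Ω) ≤ 4 * (2 * r i)) →
        -- touching cubes have comparable sizes
        (∀ i j, (Metric.closedBall (c i) (r i) ∩ Metric.closedBall (c j) (r j)).Nonempty →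
              (1 / 4) * (2 * r i) ≤ 2 * r j ∧ 2 * r j ≤ 4 * (2 * r i)) →
        -- bounded overlap of the dilated cubes (9/8)Q
        (∀ x : En n, {i : ι | x ∈ Metric.closedBall (c i) (9 / 8 * r i)}.Finite) →
        (∀ x : En n, {i : ι | x ∈ Metric.closedBall (c i) (9 / 8 * r i)}.ncard ≤ N) →
        -- smooth partition of unity
        (∀ i, ContDiff ℝ (⊤ : ℕ∞) (φ i)) →
        (∀ i x, 0 ≤ φ i x ∧ φ i x ≤ 1) →
        (∀ i, Function.support (φ i) ⊆ Metric.closedBall (c i) (9 / 8 * r i)) →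
        (∀ x ∈ Ω, ∑ᶠ i, φ i x = 1) →
        -- derivative bounds |D^β φ_Q| ≤ C(n) (diam Q)^{-|β|}, |β| ≤ 2
        (∀ i, ∀ k : ℕ, k ≤ 2 → ∀ x, ‖iteratedFDeriv ℝ k (φ i) x‖ ≤ Cn / (2 * r i) ^ k) →
        -- compatibility of the affine polynomials P_Q(x) = p_Q + ⟨g_Q, x⟩ on touching cubes
        (∀ i j, (Metric.closedBall (c i) (r i) ∩ Metric.closedBall (c j) (r j)).Nonempty →
          (∀ x ∈ Metric.closedBall (c j) (r j),
            |(p i + ip (g i) x) - (p j + ip (g j) x)| ≤ η * (2 * r i) ^ 2) ∧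
          ‖g i - g j‖ ≤ η * (2 * r i + 2 * r j)) →
        ContDiffOn ℝ 2 (fun x => ∑ᶠ i, φ i x * (p i + ip (g i) x)) Ω ∧
        C2norm Ω (fun x => ∑ᶠ i, φ i x * (p i + ip (g i) x)) ≤ γ * η := by
  classical
  set Λ : ℕ := (2 * 220 + 1) ^ n * N with hΛ
  set Kterm : ℝ := Cn * (Λ : ℝ) * (500 * (n + 1)) with hKterm
  set Kfin : ℝ := (N : ℝ) * Kterm with hKfin
  have hKtermnn : 0 ≤ Kterm := by positivity
  have hKfinnn : 0 ≤ Kfin := by positivity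
  refine ⟨(n : ℝ) ^ 2 * Kfin + 1, by positivity, ?_⟩
  intro Ω ι c r φ p g η hopen hconn hnuniv hη hr hcover hWhit htouchsz hfin hNcard
    hφsm hφ01 hφsupp hpart hderiv hcomp
  set F : En n → ℝ := fun x => ∑ᶠ i, φ i x * (p i + ip (g i) x) with hF
  set B : ι → Set (En n) := fun i => Metric.closedBall (c i) (r i) with hBdef
  set B' : ι → Set (En n) := fun i => Metric.closedBall (c i) (9 / 8 * r i) with hB'def
  have hfr : (frontier Ω).Nonempty := by
    by_contra hemp
    rw [Set.not_nonempty_iff_eq_empty] at hemp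
    rcases isClopen_iff.mp (isClopen_iff_frontier_eq_empty.mpr hemp) with h | h
    · exact (hconn.nonempty.ne_empty) h
    · exact hnuniv h
  have hBsub : ∀ i, B i ⊆ Ω := by
    intro i
    rw [hcover]
    exact Set.subset_iUnion (fun i => B i) i
  have hBB' : ∀ i, B i ⊆ B' i := fun i =>
    Metric.closedBall_subset_closedBall (by nlinarith [hr i])
  have hcB : ∀ i, c i ∈ B i := fun i => Metric.mem_closedBall_self (le_of_lt (hr i))
  have hDlow : ∀ i, ∀ y ∈ B' i, ∀ w ∈ frontier Ω, 7 / 8 * r i ≤ dist y w := by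
    intro i y hy w hw
    have h1 : 2 * r i ≤ dist (c i) w := by
      refine le_trans (hWhit i).1 (csInf_le ?_ ?_)
      · exact ⟨0, fun d ⟨a, _, b, _, hd⟩ => hd ▸ dist_nonneg⟩
      · exact ⟨c i, hcB i, w, hw, rfl⟩
    have h2 : dist (c i) w ≤ dist (c i) y + dist y w := dist_triangle _ _ _
    have h3 : dist (c i) y ≤ 9 / 8 * r i := by rw [dist_comm]; exact hy
    linarith
  have hIlow : ∀ i, ∀ y ∈ B' i, 7 / 8 * r i ≤ infDist y (frontier Ω) := by
    intro i y hy
    by_contra hlt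
    push_neg at hlt
    obtain ⟨w, hw, hdw⟩ := (infDist_lt_iff hfr).mp hlt
    exact absurd hdw (not_lt.mpr (hDlow i y hy w hw))
  have hIup : ∀ i, ∀ y ∈ B' i, infDist y (frontier Ω) ≤ 12 * r i := by
    intro i y hy
    have h1 : setDist (B i) (frontier Ω) < 9 * r i :=
      lt_of_le_of_lt (hWhit i).2 (by nlinarith [hr i])
    have hbdd : BddBelow {d : ℝ | ∃ a ∈ B i, ∃ b ∈ frontier Ω, d = dist a b} :=
      ⟨0, fun d ⟨a, _, b, _, hd⟩ => hd ▸ dist_nonneg⟩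
    have hnon : {d : ℝ | ∃ a ∈ B i, ∃ b ∈ frontier Ω, d = dist a b}.Nonempty :=
      ⟨dist (c i) hfr.choose, c i, hcB i, hfr.choose, hfr.choose_spec, rfl⟩
    rw [setDist] at h1
    obtain ⟨e, ⟨a, ha, w, hw, he⟩, helt⟩ := (csInf_lt_iff hbdd hnon).mp h1
    have h2 : infDist y (frontier Ω) ≤ dist y w := infDist_le_dist_of_mem hw
    have h3 : dist y w ≤ dist y (c i) + dist (c i) a + dist a w := dist_triangle4 _ _ _ _
    have h4 : dist y (c i) ≤ 9 / 8 * r i := hy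
    have h5 : dist (c i) a ≤ r i := by rw [dist_comm]; exact ha
    have h6 : dist a w < 9 * r i := he ▸ helt
    linarith [le_of_lt (hr i)]
  have hB'fr : ∀ i, ∀ y ∈ B' i, y ∉ frontier Ω := by
    intro i y hy hyfr
    have h0 := hDlow i y hy y hyfr
    rw [dist_self] at h0
    nlinarith [hr i]
  have hB'sub : ∀ i, B' i ⊆ Ω := by
    intro i y hy
    have hseg : segment ℝ (c i) y ⊆ B' i :=
      (convex_closedBall _ _).segment_subset (hBB' i (hcB i)) hy
    exact seg_sub hopen (hBsub i (hcB i))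
      (fun z hz => hB'fr i z (hseg hz)) (right_mem_segment ℝ _ _)
  -- main local analysis at a point x ∈ Ω
  have hmain : ∀ x ∈ Ω, ContDiffWithinAt ℝ 2 F Ω x ∧
      ∀ a b : Fin n, |pd2 a b F x| ≤ Kfin * η := by
    intro x hx
    set d : ℝ := infDist x (frontier Ω) with hd
    have hdpos : 0 < d := by
      rw [hd]
      refine (isClosed_frontier.notMem_iff_infDist_pos hfr).mp ?_
      intro hxf
      rw [hopen.frontier_eq] at hxf
      exact hxf.2 hx
    set ε : ℝ := d / 4 with hε
    have hεpos : 0 < ε := by positivity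
    have hsize : ∀ k, ∀ y ∈ Metric.ball x ε, φ k y ≠ 0 →
        d / 16 ≤ r k ∧ r k ≤ 10 * d / 7 ∧ y ∈ B' k := by
      intro k y hy hφky
      have hyB' : y ∈ B' k := hφsupp k hφky
      have h1 : d ≤ infDist y (frontier Ω) + dist x y := infDist_le_infDist_add_dist
      have h2 : infDist y (frontier Ω) ≤ d + dist y x := infDist_le_infDist_add_dist
      have hxy : dist x y < ε := mem_ball'.mp hy
      have hyx : dist y x < ε := mem_ball.mp hy
      have h3 := hIlow k y hyB'
      have h4 := hIup k y hyB'
      exact ⟨by nlinarith, by nlinarith, hyB'⟩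
    have hTfin : {k : ι | ∃ y ∈ Metric.ball x ε, φ k y ≠ 0}.Finite := by
      refine (grid_count x (d / 16) (by positivity) 30
        {k : ι | ∃ y ∈ Metric.ball x ε, φ k y ≠ 0}
        (fun z => {i : ι | z ∈ B' i}) (fun z => hfin z) (fun z => hNcard z) ?_).1
      rintro k ⟨y, hy, hφky⟩
      obtain ⟨hrk1, hrk2, hyB'⟩ := hsize k y hy hφky
      refine ⟨c k, ?_, ?_⟩
      · intro l
        have h1 : dist (c k l) (x l) ≤ dist (c k) x := dist_le_pi_dist (c k) x l
        have h2 : dist (c k) x ≤ dist (c k) y + dist y x := dist_triangle _ _ _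
        have h3 : dist (c k) y ≤ 9 / 8 * r k := by rw [dist_comm]; exact hyB'
        have h4 : dist y x < ε := mem_ball.mp hy
        rw [Real.dist_eq] at h1
        calc |c k l - x l| ≤ dist (c k) x := h1
        _ ≤ 9 / 8 * r k + ε := by linarith
        _ ≤ d / 16 * (30 : ℕ) := by push_cast; nlinarith
      · intro z hz
        have h5 : dist z (c k) ≤ 9 / 8 * r k := by
          have : d / 16 / 2 ≤ r k := by linarith
          nlinarith [hr k]
        exact Set.mem_setOf.mpr (Metric.mem_closedBall.mpr h5)
    set T : Finset ι := hTfin.toFinset with hT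
    have hballΩ : Metric.ball x ε ⊆ Ω := by
      intro y hy
      have hsegball : segment ℝ x y ⊆ Metric.ball x ε :=
        (convex_ball x ε).segment_subset (mem_ball_self hεpos) hy
      refine seg_sub hopen hx (fun z hz hzfr => ?_) (right_mem_segment ℝ x y)
      have h1 : d ≤ dist x z := infDist_le_dist_of_mem hzfr
      have h2 : dist x z < ε := mem_ball'.mp (hsegball hz)
      linarith
    have hxcov : x ∈ ⋃ i, B i := by rw [← hcover]; exact hx
    obtain ⟨j, hxj⟩ := Set.mem_iUnion.mp hxcov
    set H : En n → ℝ := fun y => (p j + ip (g j) y)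
        + ∑ k ∈ T, φ k y * ((p k - p j) + ip (g k - g j) y) with hH
    have hHsum_sm : ContDiff ℝ (⊤ : ℕ∞) (fun y => ∑ k ∈ T, φ k y * ((p k - p j) + ip (g k - g j) y)) :=
      ContDiff.sum fun k _ => (hφsm k).mul (contDiff_affine _ _)
    have hHsm : ContDiff ℝ (⊤ : ℕ∞) H := (contDiff_affine _ _).add hHsum_sm
    have hEqOn : Set.EqOn F H (Metric.ball x ε) := by
      intro y hy
      have hsupp1 : (Function.support fun k => φ k y * (p k + ip (g k) y)) ⊆ ↑T := by
        intro k hk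
        rw [Function.mem_support] at hk
        have hφky : φ k y ≠ 0 := fun h0 => hk (by rw [h0, zero_mul])
        rw [hT, Set.Finite.coe_toFinset]
        exact ⟨y, hy, hφky⟩
      have hsupp2 : (Function.support fun k => φ k y) ⊆ ↑T := by
        intro k hk
        rw [hT, Set.Finite.coe_toFinset]
        exact ⟨y, hy, hk⟩
      have e1 : F y = ∑ k ∈ T, φ k y * (p k + ip (g k) y) :=
        finsum_eq_sum_of_support_subset _ hsupp1
      have e2 : ∑ k ∈ T, φ k y = 1 := by
        rw [← finsum_eq_sum_of_support_subset _ hsupp2]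
        exact hpart y (hballΩ hy)
      have e3 : ∑ k ∈ T, φ k y * ((p k - p j) + ip (g k - g j) y)
          = (∑ k ∈ T, φ k y * (p k + ip (g k) y))
            - (∑ k ∈ T, φ k y) * (p j + ip (g j) y) := by
        rw [Finset.sum_mul, ← Finset.sum_sub_distrib]
        refine Finset.sum_congr rfl fun k _ => ?_
        rw [ip_sub_left]
        ring
      show F y = (p j + ip (g j) y)
          + ∑ k ∈ T, φ k y * ((p k - p j) + ip (g k - g j) y)
      rw [e1, e3, e2]
      ring
    have hball_mem : Metric.ball x ε ∈ nhds x := isOpen_ball.mem_nhds (mem_ball_self hεpos)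
    have hFH : F =ᶠ[nhds x] H := Filter.eventuallyEq_of_mem hball_mem hEqOn
    refine ⟨(((hHsm.of_le (by exact WithTop.coe_le_coe.mpr (le_top : ((2 : ℕ) : ℕ∞) ≤ ⊤))).contDiffAt).congr_of_eventuallyEq hFH).contDiffWithinAt, ?_⟩
    -- chain estimate for every dilated cube containing x
    have hchain : ∀ k, x ∈ B' k →
        ‖g k - g j‖ ≤ (Λ : ℝ) * (η * (55 * r k)) ∧
        |(p k + ip (g k) x) - (p j + ip (g j) x)|
          ≤ (Λ : ℝ) * (η * ((1700 * (n + 1)) * r k ^ 2)) := by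
      intro k hxk
      set S : Set (En n) := segment ℝ x (c k) with hS
      have hSB' : S ⊆ B' k := (convex_closedBall _ _).segment_subset hxk (hBB' k (hcB k))
      have hSΩ : S ⊆ Ω := fun z hz => hB'sub k (hSB' hz)
      set C : Set ι := {m | (B m ∩ S).Nonempty} with hC
      have hCr : ∀ m ∈ C, 7 / 96 * r k ≤ r m ∧ r m ≤ 96 / 7 * r k := by
        rintro m ⟨z, hzB, hzS⟩
        have hzB' : z ∈ B' m := hBB' m hzB
        have h1 := hIlow m z hzB'
        have h2 := hIup m z hzB'
        have h3 := hIlow k z (hSB' hzS)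
        have h4 := hIup k z (hSB' hzS)
        exact ⟨by linarith, by linarith⟩
      have hCbox : ∀ m ∈ C, dist (c m) x ≤ 16 * r k := by
        rintro m ⟨z, hzB, hzS⟩
        have h1 : dist (c m) z ≤ r m := by rw [dist_comm]; exact hzB
        have h2 : dist z (c k) ≤ 9 / 8 * r k := hSB' hzS
        have h3 : dist x (c k) ≤ 9 / 8 * r k := hxk
        have h4 : dist (c m) x ≤ dist (c m) z + dist z (c k) + dist (c k) x :=
          dist_triangle4 _ _ _ _
        have h5 := (hCr m ⟨z, hzB, hzS⟩).2
        rw [dist_comm (c k) x] at h4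
        linarith [le_of_lt (hr k)]
      have hanchor : ∀ m ∈ C, ∃ mm : En n, (∀ l, |mm l - x l| ≤ 7 / 96 * r k * (220 : ℕ)) ∧
          (∀ z : En n, dist z mm ≤ 7 / 96 * r k / 2 → m ∈ {i : ι | z ∈ B' i}) := by
        intro m hm
        refine ⟨c m, ?_, ?_⟩
        · intro l
          have h1 : dist (c m l) (x l) ≤ dist (c m) x := dist_le_pi_dist (c m) x l
          rw [Real.dist_eq] at h1
          calc |c m l - x l| ≤ dist (c m) x := h1
          _ ≤ 16 * r k := hCbox m hm
          _ ≤ 7 / 96 * r k * (220 : ℕ) := by push_cast; nlinarith [hr k]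
        · intro z hz
          have h5 : dist z (c m) ≤ 9 / 8 * r m := by
            have h6 := (hCr m hm).1
            have h7 := hr m
            nlinarith
          exact Set.mem_setOf.mpr (Metric.mem_closedBall.mpr h5)
      obtain ⟨hCfin, hCcard⟩ := grid_count x (7 / 96 * r k) (by linarith [hr k]) 220 C
        (fun z => {i : ι | z ∈ B' i}) (fun z => hfin z) (fun z => hNcard z) hanchor
      have hkC : k ∈ C := ⟨c k, hcB k, right_mem_segment ℝ x (c k)⟩
      have hjC : j ∈ C := ⟨x, hxj, left_mem_segment ℝ x (c k)⟩
      have hcovS : S ⊆ ⋃ m ∈ C, B m := by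
        intro z hz
        have hzΩ : z ∈ Ω := hSΩ hz
        rw [hcover] at hzΩ
        obtain ⟨m, hm⟩ := Set.mem_iUnion.mp hzΩ
        exact Set.mem_biUnion ⟨z, hm, hz⟩ hm
      have hrtg := cover_rtg S (convex_segment x (c k)).isPreconnected C hCfin B
        (fun m => Metric.isClosed_closedBall) hcovS hkC hjC
        ⟨hcB k, right_mem_segment ℝ x (c k)⟩ ⟨hxj, left_mem_segment ℝ x (c k)⟩
      have hΛcast : (C.ncard : ℝ) ≤ (Λ : ℝ) := by exact_mod_cast hCcard
      constructor
      · have hcb := chain_bound C hCfin (fun a b => (B a ∩ B b).Nonempty)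
          (fun a b ⟨z, h1, h2⟩ => ⟨z, h2, h1⟩)
          (fun a b => ‖g a - g b‖) (fun a => by simp)
          (fun a b c' => by
            simpa [dist_eq_norm] using dist_triangle (g a) (g b) (g c'))
          (η * (55 * r k)) (mul_nonneg hη (by linarith [hr k])) ?hadj1 hrtg hkC
        case hadj1 =>
          intro a b haC hbC htch
          have hgr := (hcomp a b htch).2
          have hra := hCr a haC
          have hrb := hCr b hbC
          have hrk := hr k
          have hlin : 2 * r a + 2 * r b ≤ 55 * r k := by linarith [hra.2, hrb.2]
          calc ‖g a - g b‖ ≤ η * (2 * r a + 2 * r b) := hgr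
          _ ≤ η * (55 * r k) := mul_le_mul_of_nonneg_left hlin hη
        calc ‖g k - g j‖ ≤ (C.ncard : ℝ) * (η * (55 * r k)) := hcb
        _ ≤ (Λ : ℝ) * (η * (55 * r k)) :=
            mul_le_mul_of_nonneg_right hΛcast
              (mul_nonneg hη (by linarith [hr k]))
      · have hcb := chain_bound C hCfin (fun a b => (B a ∩ B b).Nonempty)
          (fun a b ⟨z, h1, h2⟩ => ⟨z, h2, h1⟩)
          (fun a b => |(p a + ip (g a) x) - (p b + ip (g b) x)|) (fun a => by simp)
          (fun a b c' => abs_sub_le _ _ _)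
          (η * ((1700 * (n + 1)) * r k ^ 2)) (mul_nonneg hη (by positivity)) ?hadj2 hrtg hkC
        case hadj2 =>
          intro a b haC hbC htch
          obtain ⟨hval, hgrad⟩ := hcomp a b htch
          have h1 := hval (c b) (hcB b)
          have h2 : (p a + ip (g a) x) - (p b + ip (g b) x)
              = ((p a + ip (g a) (c b)) - (p b + ip (g b) (c b)))
                + ip (g a - g b) (x - c b) := by
            rw [ip_sub_right, ip_sub_left, ip_sub_left]
            ring
          have h3 : |ip (g a - g b) (x - c b)| ≤ n * ‖g a - g b‖ * ‖x - c b‖ := abs_ip_le _ _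
          have h4 : ‖x - c b‖ ≤ 16 * r k := by
            rw [← dist_eq_norm, dist_comm]
            exact hCbox b hbC
          have hra := hCr a haC
          have hrb := hCr b hbC
          have hrk := hr k
          have hnn : (0 : ℝ) ≤ n := Nat.cast_nonneg n
          have h5 : ‖g a - g b‖ ≤ η * (2 * r a + 2 * r b) := hgrad
          have h6 : |(p a + ip (g a) x) - (p b + ip (g b) x)|
              ≤ |(p a + ip (g a) (c b)) - (p b + ip (g b) (c b))|
                + |ip (g a - g b) (x - c b)| := by
            rw [h2]; exact abs_add_le _ _
          have hra0 : (0:ℝ) ≤ r a := by linarith [hra.1]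
          have hrb0 : (0:ℝ) ≤ r b := by linarith [hrb.1]
          have habnn : (0:ℝ) ≤ η * (2 * r a + 2 * r b) := mul_nonneg hη (by linarith)
          have h7 : (n : ℝ) * ‖g a - g b‖ * ‖x - c b‖
              ≤ n * (η * (2 * r a + 2 * r b)) * (16 * r k) := by
            have hgnn : (0:ℝ) ≤ ‖g a - g b‖ := norm_nonneg _
            have hxnn : (0:ℝ) ≤ ‖x - c b‖ := norm_nonneg _
            have h70 := mul_le_mul h5 h4 hxnn habnn
            nlinarith
          have h8 : η * (2 * r a) ^ 2 ≤ 754 * (η * r k ^ 2) := by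
            have h80 : r a * r a ≤ (96 / 7 * r k) * (96 / 7 * r k) :=
              mul_self_le_mul_self hra0 hra.2
            nlinarith
          have h9 : (n : ℝ) * (η * (2 * r a + 2 * r b)) * (16 * r k)
              ≤ 880 * ((n : ℝ) * (η * r k ^ 2)) := by
            have hlin : 2 * r a + 2 * r b ≤ 55 * r k := by linarith [hra.2, hrb.2]
            have h90 : η * (2 * r a + 2 * r b) ≤ η * (55 * r k) :=
              mul_le_mul_of_nonneg_left hlin hη
            have h91 : (n : ℝ) * (η * (2 * r a + 2 * r b)) ≤ (n : ℝ) * (η * (55 * r k)) :=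
              mul_le_mul_of_nonneg_left h90 (Nat.cast_nonneg n)
            have h92 : (n : ℝ) * (η * (2 * r a + 2 * r b)) * (16 * r k)
                ≤ (n : ℝ) * (η * (55 * r k)) * (16 * r k) :=
              mul_le_mul_of_nonneg_right h91 (by linarith)
            calc (n : ℝ) * (η * (2 * r a + 2 * r b)) * (16 * r k)
                ≤ (n : ℝ) * (η * (55 * r k)) * (16 * r k) := h92
            _ = 880 * ((n : ℝ) * (η * r k ^ 2)) := by ring
          have e1 : (0:ℝ) ≤ η * r k ^ 2 := mul_nonneg hη (sq_nonneg _)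
          have e2 : (0:ℝ) ≤ (n : ℝ) * (η * r k ^ 2) :=
            mul_nonneg (Nat.cast_nonneg n) e1
          calc |(p a + ip (g a) x) - (p b + ip (g b) x)|
              ≤ |(p a + ip (g a) (c b)) - (p b + ip (g b) (c b))|
                + |ip (g a - g b) (x - c b)| := h6
          _ ≤ η * (2 * r a) ^ 2 + n * (η * (2 * r a + 2 * r b)) * (16 * r k) :=
              add_le_add h1 (le_trans h3 h7)
          _ ≤ 754 * (η * r k ^ 2) + 880 * ((n : ℝ) * (η * r k ^ 2)) := add_le_add h8 h9
          _ ≤ η * ((1700 * (n + 1)) * r k ^ 2) := by nlinarith [e1, e2]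
        calc |(p k + ip (g k) x) - (p j + ip (g j) x)|
            ≤ (C.ncard : ℝ) * (η * ((1700 * (n + 1)) * r k ^ 2)) := hcb
        _ ≤ (Λ : ℝ) * (η * ((1700 * (n + 1)) * r k ^ 2)) :=
            mul_le_mul_of_nonneg_right hΛcast
              (mul_nonneg hη (by positivity))
    -- pd2 of F at x equals an explicit finite sum
    have hpd2 : ∀ a b : Fin n, pd2 a b F x
        = ∑ k ∈ T, ((g k - g j) b * fderiv ℝ (φ k) x (Pi.single a 1)
            + (g k - g j) a * fderiv ℝ (φ k) x (Pi.single b 1)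
            + ((p k - p j) + ip (g k - g j) x) * pd2 a b (φ k) x) := by
      intro a b
      rw [pd2_congr hFH a b, hH]
      rw [pd2_add (contDiff_affine _ _) hHsum_sm a b x, pd2_affine, zero_add,
        pd2_sum T _ (fun k _ => (hφsm k).mul (contDiff_affine _ _)) a b x]
      exact Finset.sum_congr rfl fun k _ => pd2_mul_affine (hφsm k) a b _ _ x
    -- vanishing of terms for cubes away from x
    have hzero : ∀ k, x ∉ B' k → ∀ a b : Fin n,
        (g k - g j) b * fderiv ℝ (φ k) x (Pi.single a 1)
          + (g k - g j) a * fderiv ℝ (φ k) x (Pi.single b 1)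
          + ((p k - p j) + ip (g k - g j) x) * pd2 a b (φ k) x = 0 := by
      intro k hxk a b
      have hev : φ k =ᶠ[nhds x] 0 := by
        refine Filter.eventuallyEq_of_mem
          ((isOpen_compl_iff.mpr Metric.isClosed_closedBall).mem_nhds hxk) ?_
        intro y hy
        by_contra h0
        exact hy (hφsupp k h0)
      rw [fderiv_eventually_zero hev a, fderiv_eventually_zero hev b,
        pd2_eventually_zero hev a b]
      ring
    -- per-term estimate
    have hterm : ∀ k, ∀ a b : Fin n,
        |(g k - g j) b * fderiv ℝ (φ k) x (Pi.single a 1)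
          + (g k - g j) a * fderiv ℝ (φ k) x (Pi.single b 1)
          + ((p k - p j) + ip (g k - g j) x) * pd2 a b (φ k) x| ≤ Kterm * η := by
      intro k a b
      by_cases hxk : x ∈ B' k
      · obtain ⟨hg, hP⟩ := hchain k hxk
        have hrk := hr k
        have hd1 : ∀ e : Fin n, |fderiv ℝ (φ k) x (Pi.single e 1)| ≤ Cn / (2 * r k) := by
          intro e
          calc |fderiv ℝ (φ k) x (Pi.single e 1)| ≤ ‖iteratedFDeriv ℝ 1 (φ k) x‖ :=
              abs_fderiv_le (φ k) x e
          _ ≤ Cn / (2 * r k) ^ 1 := hderiv k 1 (by norm_num) x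
          _ = Cn / (2 * r k) := by rw [pow_one]
        have hd2 : |pd2 a b (φ k) x| ≤ Cn / (2 * r k) ^ 2 :=
          le_trans (abs_pd2_le (hφsm k) a b x) (hderiv k 2 (by norm_num) x)
        have hga : ∀ e : Fin n, |(g k - g j) e| ≤ ‖g k - g j‖ := by
          intro e
          have := norm_le_pi_norm (g k - g j) e
          rwa [Real.norm_eq_abs] at this
        have hψ : |(p k - p j) + ip (g k - g j) x|
            ≤ (Λ : ℝ) * (η * ((1700 * (n + 1)) * r k ^ 2)) := by
          have he : (p k - p j) + ip (g k - g j) x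
              = (p k + ip (g k) x) - (p j + ip (g j) x) := by
            rw [ip_sub_left]; ring
          rw [he]; exact hP
        have habs : |(g k - g j) b * fderiv ℝ (φ k) x (Pi.single a 1)
            + (g k - g j) a * fderiv ℝ (φ k) x (Pi.single b 1)
            + ((p k - p j) + ip (g k - g j) x) * pd2 a b (φ k) x|
            ≤ |(g k - g j) b| * |fderiv ℝ (φ k) x (Pi.single a 1)|
              + |(g k - g j) a| * |fderiv ℝ (φ k) x (Pi.single b 1)|
              + |(p k - p j) + ip (g k - g j) x| * |pd2 a b (φ k) x| := by
          calc |(g k - g j) b * fderiv ℝ (φ k) x (Pi.single a 1)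
              + (g k - g j) a * fderiv ℝ (φ k) x (Pi.single b 1)
              + ((p k - p j) + ip (g k - g j) x) * pd2 a b (φ k) x|
              ≤ |(g k - g j) b * fderiv ℝ (φ k) x (Pi.single a 1)
                + (g k - g j) a * fderiv ℝ (φ k) x (Pi.single b 1)|
                + |((p k - p j) + ip (g k - g j) x) * pd2 a b (φ k) x| := abs_add_le _ _
          _ ≤ (|(g k - g j) b * fderiv ℝ (φ k) x (Pi.single a 1)|
                + |(g k - g j) a * fderiv ℝ (φ k) x (Pi.single b 1)|)
                + |((p k - p j) + ip (g k - g j) x) * pd2 a b (φ k) x| :=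
              add_le_add_left (abs_add_le _ _) _
          _ = |(g k - g j) b| * |fderiv ℝ (φ k) x (Pi.single a 1)|
              + |(g k - g j) a| * |fderiv ℝ (φ k) x (Pi.single b 1)|
              + |(p k - p j) + ip (g k - g j) x| * |pd2 a b (φ k) x| := by
              rw [abs_mul, abs_mul, abs_mul]
        have hgb' : |(g k - g j) b| ≤ (Λ : ℝ) * (η * (55 * r k)) := le_trans (hga b) hg
        have hga' : |(g k - g j) a| ≤ (Λ : ℝ) * (η * (55 * r k)) := le_trans (hga a) hg
        have hDnn : (0:ℝ) ≤ Cn / (2 * r k) := by positivity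
        have hD2nn : (0:ℝ) ≤ Cn / (2 * r k) ^ 2 := by positivity
        have ht1 : |(g k - g j) b| * |fderiv ℝ (φ k) x (Pi.single a 1)|
            ≤ ((Λ : ℝ) * (η * (55 * r k))) * (Cn / (2 * r k)) :=
          mul_le_mul hgb' (hd1 a) (abs_nonneg _) (by positivity)
        have ht2 : |(g k - g j) a| * |fderiv ℝ (φ k) x (Pi.single b 1)|
            ≤ ((Λ : ℝ) * (η * (55 * r k))) * (Cn / (2 * r k)) :=
          mul_le_mul hga' (hd1 b) (abs_nonneg _) (by positivity)
        have ht3 : |(p k - p j) + ip (g k - g j) x| * |pd2 a b (φ k) x|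
            ≤ ((Λ : ℝ) * (η * ((1700 * (n + 1)) * r k ^ 2))) * (Cn / (2 * r k) ^ 2) :=
          mul_le_mul hψ hd2 (abs_nonneg _) (by positivity)
        have hrkne : r k ≠ 0 := ne_of_gt hrk
        have hkey : ((Λ : ℝ) * (η * (55 * r k))) * (Cn / (2 * r k)) * 2
            + ((Λ : ℝ) * (η * ((1700 * (n + 1)) * r k ^ 2))) * (Cn / (2 * r k) ^ 2)
            = (Λ : ℝ) * η * Cn * (55 + 425 * (n + 1)) := by
          field_simp
          ring
        have hfinal : (Λ : ℝ) * η * Cn * (55 + 425 * (n + 1)) ≤ Kterm * η := by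
          rw [hKterm]
          have hnn : (0:ℝ) ≤ (n : ℝ) := Nat.cast_nonneg n
          have hΛnn : (0:ℝ) ≤ (Λ : ℝ) := Nat.cast_nonneg Λ
          nlinarith [mul_nonneg (mul_nonneg hΛnn hη) (le_of_lt hCn)]
        calc |(g k - g j) b * fderiv ℝ (φ k) x (Pi.single a 1)
            + (g k - g j) a * fderiv ℝ (φ k) x (Pi.single b 1)
            + ((p k - p j) + ip (g k - g j) x) * pd2 a b (φ k) x|
            ≤ |(g k - g j) b| * |fderiv ℝ (φ k) x (Pi.single a 1)|
              + |(g k - g j) a| * |fderiv ℝ (φ k) x (Pi.single b 1)|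
              + |(p k - p j) + ip (g k - g j) x| * |pd2 a b (φ k) x| := habs
        _ ≤ ((Λ : ℝ) * (η * (55 * r k))) * (Cn / (2 * r k)) * 2
              + ((Λ : ℝ) * (η * ((1700 * (n + 1)) * r k ^ 2))) * (Cn / (2 * r k) ^ 2) := by
            linarith
        _ = (Λ : ℝ) * η * Cn * (55 + 425 * (n + 1)) := hkey
        _ ≤ Kterm * η := hfinal
      · rw [hzero k hxk a b]
        simpa using mul_nonneg hKtermnn hη
    -- sum up
    intro a b
    rw [hpd2 a b]
    calc |∑ k ∈ T, ((g k - g j) b * fderiv ℝ (φ k) x (Pi.single a 1)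
            + (g k - g j) a * fderiv ℝ (φ k) x (Pi.single b 1)
            + ((p k - p j) + ip (g k - g j) x) * pd2 a b (φ k) x)|
        ≤ ∑ k ∈ T, |(g k - g j) b * fderiv ℝ (φ k) x (Pi.single a 1)
            + (g k - g j) a * fderiv ℝ (φ k) x (Pi.single b 1)
            + ((p k - p j) + ip (g k - g j) x) * pd2 a b (φ k) x| :=
          Finset.abs_sum_le_sum_abs _ _
    _ = ∑ k ∈ T.filter (fun k => x ∈ B' k),
          |(g k - g j) b * fderiv ℝ (φ k) x (Pi.single a 1)
            + (g k - g j) a * fderiv ℝ (φ k) x (Pi.single b 1)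
            + ((p k - p j) + ip (g k - g j) x) * pd2 a b (φ k) x| := by
        symm
        apply Finset.sum_subset (Finset.filter_subset _ _)
        intro k hk hnk
        have hxk : x ∉ B' k := fun h => hnk (Finset.mem_filter.mpr ⟨hk, h⟩)
        rw [hzero k hxk a b]
        simp
    _ ≤ ∑ _k ∈ T.filter (fun k => x ∈ B' k), Kterm * η :=
        Finset.sum_le_sum (fun k _ => hterm k a b)
    _ = ((T.filter (fun k => x ∈ B' k)).card : ℝ) * (Kterm * η) := by
        rw [Finset.sum_const, nsmul_eq_mul]
    _ ≤ (N : ℝ) * (Kterm * η) := by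
        refine mul_le_mul_of_nonneg_right ?_ (mul_nonneg hKtermnn hη)
        have hcard : (T.filter (fun k => x ∈ B' k)).card ≤ N := by
          have hsub : ↑(T.filter (fun k => x ∈ B' k)) ⊆ {i : ι | x ∈ B' i} := by
            intro k hk
            exact (Finset.mem_filter.mp hk).2
          calc (T.filter (fun k => x ∈ B' k)).card
              = (↑(T.filter (fun k => x ∈ B' k)) : Set ι).ncard :=
                (Set.ncard_coe_finset _).symm
          _ ≤ ({i : ι | x ∈ B' i}).ncard := Set.ncard_le_ncard hsub (hfin x)
          _ ≤ N := hNcard x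
        exact_mod_cast hcard
    _ = Kfin * η := by rw [hKfin]; ring
  refine ⟨fun x hx => (hmain x hx).1, ?_⟩
  have hsup : ∀ q : Fin n × Fin n, (⨆ x ∈ Ω, |pd2 q.1 q.2 F x|) ≤ Kfin * η := by
    intro q
    refine Real.iSup_le (fun x => ?_) (mul_nonneg hKfinnn hη)
    exact Real.iSup_le (fun hx => (hmain x hx).2 q.1 q.2) (mul_nonneg hKfinnn hη)
  have hfilter : ((Finset.univ.filter (fun q : Fin n × Fin n => q.1 ≤ q.2)).card : ℝ)
      ≤ (n : ℝ) ^ 2 := by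
    have hc : (Finset.univ.filter (fun q : Fin n × Fin n => q.1 ≤ q.2)).card ≤ n ^ 2 := by
      calc (Finset.univ.filter (fun q : Fin n × Fin n => q.1 ≤ q.2)).card
          ≤ (Finset.univ : Finset (Fin n × Fin n)).card := Finset.card_filter_le _ _
      _ = n * n := by simp
      _ = n ^ 2 := (sq n).symm
    exact_mod_cast hc
  calc C2norm Ω F
      = ∑ q ∈ Finset.univ.filter (fun q : Fin n × Fin n => q.1 ≤ q.2),
          ⨆ x ∈ Ω, |pd2 q.1 q.2 F x| := rfl
  _ ≤ ∑ _q ∈ Finset.univ.filter (fun q : Fin n × Fin n => q.1 ≤ q.2), Kfin * η :=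
      Finset.sum_le_sum (fun q _ => hsup q)
  _ = ((Finset.univ.filter (fun q : Fin n × Fin n => q.1 ≤ q.2)).card : ℝ) * (Kfin * η) := by
      rw [Finset.sum_const, nsmul_eq_mul]
  _ ≤ (n : ℝ) ^ 2 * (Kfin * η) :=
      mul_le_mul_of_nonneg_right hfilter (mul_nonneg hKfinnn hη)
  _ ≤ ((n : ℝ) ^ 2 * Kfin + 1) * η := by nlinarith [sq_nonneg (n : ℝ)]
end
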